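/- arXiv:1802.05846 — 5 statements merged into one kernel-verified Lean document; each statement's English description precedes it below -/
import Mathlib

section
/- Suppose the learning algorithm A is OAROS with rate ε1, and suppose there is a monotonically decreasing function ε2 : ℕ → ℝ such that for every n ≥ 1, E_{T̃ ~ D^{n+1}} [ L_T(A_n(T)) − L_{T̃}(A_{n+1}(T̃)) ] ≤ ε2(n), where T denotes the tuple of the first n entries of T̃. Then for all n, m ≥ 1, E_{T~D^n} E_{V~D^m} [ (1/m²) Σ_{i=1}^m Σ_{j=1}^m ( ℓ(A_n(T), V_j) − ℓ(A_{n+1}(T ⊕ V_i), V_j) ) ] ≤ (3 + 1/m)·ε1(n) + ε2(n); that is, A is On-Average-Validation-Stable with rate ε(n,m) = (3 + 1/m)·ε1(n) + ε2(n). -/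
open MeasureTheory

noncomputable section

/-- The i.i.d. sample measure of size `n` drawn from `D`. -/
def iid {Z : Type*} [MeasurableSpace Z] (D : Measure Z) (n : ℕ) :
    Measure (Fin n → Z) :=
  Measure.pi fun _ => D

/-- The learning algorithm is symmetric: invariant under permutations of the
entries of its input tuple. -/
def IsSymmetricAlg {Z H : Type*} (A : ∀ k : ℕ, (Fin k → Z) → H) : Prop :=
  ∀ (k : ℕ) (σ : Equiv.Perm (Fin k)) (S : Fin k → Z), A k (S ∘ σ) = A k S

/-- For each `k`, the map `(S, z) ↦ ℓ(A k S, z)` is measurable and bounded. -/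
def MeasBddAlg {Z H : Type*} [MeasurableSpace Z] (ℓ : H → Z → ℝ)
    (A : ∀ k : ℕ, (Fin k → Z) → H) : Prop :=
  ∀ k : ℕ, Measurable (fun p : (Fin k → Z) × Z => ℓ (A k p.1) p.2) ∧
    ∃ C : ℝ, ∀ (S : Fin k → Z) (z : Z), ℓ (A k S) z ≤ C

/-- On-Average-Replace-One-Stability with rate `ε1`. -/
def OAROS {Z H : Type*} [MeasurableSpace Z] (ℓ : H → Z → ℝ)
    (A : ∀ k : ℕ, (Fin k → Z) → H) (ε1 : ℕ → ℝ) : Prop :=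
  Antitone ε1 ∧
  ∀ (D : Measure Z), IsProbabilityMeasure D → ∀ n : ℕ, 1 ≤ n →
    ∫ T, ∫ x',
        (n : ℝ)⁻¹ * ∑ i : Fin n,
          |ℓ (A n T) (T i) - ℓ (A n (Function.update T i x')) (T i)|
      ∂D ∂(iid D n) ≤ ε1 n

namespace OAVSaux


lemma integral_comp_mp {α β : Type*} [MeasurableSpace α] [MeasurableSpace β]
    {μ : Measure α} {ν : Measure β} {φ : α → β} (h : MeasurePreserving φ μ ν)
    {G : β → ℝ} (hG : AEStronglyMeasurable G ν) :
    ∫ x, G (φ x) ∂μ = ∫ y, G y ∂ν := by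
  rw [← h.map_eq] at hG ⊢
  exact (integral_map h.measurable.aemeasurable hG).symm

lemma integrable_bdd {α : Type*} [MeasurableSpace α] {μ : Measure α} [IsFiniteMeasure μ]
    {F : α → ℝ} (hm : AEStronglyMeasurable F μ) {C : ℝ} (hb : ∀ x, |F x| ≤ C) :
    Integrable F μ :=
  ⟨hm, HasFiniteIntegral.of_bounded (C := C)
    (Filter.Eventually.of_forall fun x => by simpa [Real.norm_eq_abs] using hb x)⟩

variable {Z : Type*} [MeasurableSpace Z] (D : Measure Z) [IsProbabilityMeasure D]

instance iid_prob (k : ℕ) : IsProbabilityMeasure (iid D k) := by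
  unfold iid; infer_instance

lemma mp_fst {α β : Type*} [MeasurableSpace α] [MeasurableSpace β]
    (μ : Measure α) (ν : Measure β) [SFinite μ] [IsProbabilityMeasure ν] :
    MeasurePreserving Prod.fst (μ.prod ν) μ :=
  ⟨measurable_fst, by simp⟩

lemma mp_snd {α β : Type*} [MeasurableSpace α] [MeasurableSpace β]
    (μ : Measure α) (ν : Measure β) [IsProbabilityMeasure μ] [SFinite ν] :
    MeasurePreserving Prod.snd (μ.prod ν) ν :=
  ⟨measurable_snd, by simp⟩

lemma mp_eval {k : ℕ} (i : Fin k) :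
    MeasurePreserving (fun V : Fin k → Z => V i) (iid D k) D := by
  refine ⟨measurable_pi_apply i, ?_⟩
  refine Measure.ext fun s hs => ?_
  rw [Measure.map_apply (measurable_pi_apply i) hs]
  have hset : (fun V : Fin k → Z => V i) ⁻¹' s
      = Set.pi Set.univ (Function.update (fun _ => (Set.univ : Set Z)) i s) := by
    ext V
    simp only [Set.mem_preimage, Set.mem_pi, Set.mem_univ, true_implies,
      Function.update_apply]
    constructor
    · intro h j
      by_cases hj : j = i
      · subst hj; simp [h]
      · simp [hj]
    · intro h
      have := h i
      simpa using this
  rw [hset]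
  unfold iid
  rw [Measure.pi_pi]
  have hres : ∀ l, D (Function.update (fun _ => (Set.univ : Set Z)) i s l)
      = Function.update (fun _ => D (Set.univ : Set Z)) i (D s) l :=
    fun l => Function.apply_update (fun _ v => D v) _ i s l
  simp_rw [hres]
  rw [Finset.prod_update_of_mem (Finset.mem_univ i)]
  simp

lemma mp_pair {k : ℕ} {i j : Fin k} (hij : i ≠ j) :
    MeasurePreserving (fun V : Fin k → Z => (V i, V j)) (iid D k) (D.prod D) := by
  refine ⟨(measurable_pi_apply i).prodMk (measurable_pi_apply j), ?_⟩
  refine Eq.symm (Measure.prod_eq fun s t hs ht => ?_)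
  rw [Measure.map_apply ((measurable_pi_apply i).prodMk (measurable_pi_apply j))
    (hs.prod ht)]
  have hset : (fun V : Fin k → Z => (V i, V j)) ⁻¹' (s ×ˢ t)
      = Set.pi Set.univ
          (Function.update (Function.update (fun _ => (Set.univ : Set Z)) i s) j t) := by
    ext V
    simp only [Set.mem_preimage, Set.mem_prod, Set.mem_pi, Set.mem_univ, true_implies,
      Function.update_apply]
    constructor
    · rintro ⟨h1, h2⟩ l
      by_cases hl : l = j
      · subst hl; simp [h2]
      · rw [if_neg hl]
        by_cases hl' : l = i
        · subst hl'; simp [h1]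
        · simp [hl']
    · intro h
      have hi := h i
      have hj' := h j
      rw [if_neg hij, if_pos rfl] at hi
      rw [if_pos rfl] at hj'
      exact ⟨hi, hj'⟩
  rw [hset]
  unfold iid
  rw [Measure.pi_pi]
  have hres : ∀ l, D (Function.update (Function.update (fun _ => (Set.univ : Set Z)) i s) j t l)
      = Function.update (Function.update (fun _ => D (Set.univ : Set Z)) i (D s)) j (D t) l := by
    intro l
    rw [Function.apply_update (fun _ v => D v) _ j t l]
    congr 1
    funext l'
    exact Function.apply_update (fun _ v => D v) _ i s l'
  simp_rw [hres]
  rw [Finset.prod_update_of_mem (Finset.mem_univ j)]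
  rw [Finset.prod_update_of_mem
    (show i ∈ Finset.univ \ {j} from Finset.mem_sdiff.2 ⟨Finset.mem_univ i, by simp [hij]⟩)]
  simp [mul_comm]

lemma mp_perm {k : ℕ} (σ : Equiv.Perm (Fin k)) :
    MeasurePreserving (fun f : Fin k → Z => f ∘ σ) (iid D k) (iid D k) := by
  have h := MeasureTheory.measurePreserving_piCongrLeft (α := fun _ : Fin k => Z) (fun _ : Fin k => D) σ.symm
  have hfun : ⇑(MeasurableEquiv.piCongrLeft (π := fun _ : Fin k => Z) σ.symm)
      = fun f : Fin k → Z => f ∘ σ := by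
    funext f
    ext l
    have := MeasurableEquiv.piCongrLeft_apply_apply (β := fun _ : Fin k => Z) (σ.symm) f (σ l)
    simpa using this
  rw [hfun] at h
  exact h

/-- the snoc measurable equivalence -/
def snocME (k : ℕ) : ((Fin k → Z) × Z) ≃ᵐ (Fin (k + 1) → Z) :=
  (MeasurableEquiv.prodComm).trans
    (MeasurableEquiv.piFinSuccAbove (fun _ => Z) (Fin.last k)).symm

lemma snocME_apply {k : ℕ} (p : (Fin k → Z) × Z) :
    snocME (Z := Z) k p = Fin.snoc p.1 p.2 := by
  show (MeasurableEquiv.piFinSuccAbove (fun _ => Z) (Fin.last k)).symm (p.2, p.1)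
      = Fin.snoc p.1 p.2
  simp [MeasurableEquiv.piFinSuccAbove, Fin.insertNthEquiv, Fin.insertNth_last']

lemma mp_snocME (k : ℕ) :
    MeasurePreserving (snocME (Z := Z) k) ((iid D k).prod D) (iid D (k + 1)) := by
  have h1 := (MeasureTheory.measurePreserving_piFinSuccAbove
    (fun _ : Fin (k + 1) => D) (Fin.last k)).symm
  have h2 := h1.comp (Measure.measurePreserving_swap
    (μ := (iid D k : Measure (Fin k → Z))) (ν := D))
  have hco : ⇑(snocME (Z := Z) k)
      = (⇑(MeasurableEquiv.piFinSuccAbove (fun _ : Fin (k+1) => Z) (Fin.last k)).symm)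
        ∘ Prod.swap := rfl
  rw [hco]
  exact h2

lemma mp_snoc (k : ℕ) :
    MeasurePreserving (fun p : (Fin k → Z) × Z => Fin.snoc p.1 p.2)
      ((iid D k).prod D) (iid D (k + 1)) := by
  have h := mp_snocME D k
  have : (fun p : (Fin k → Z) × Z => Fin.snoc p.1 p.2) = ⇑(snocME (Z := Z) k) := by
    funext p; rw [snocME_apply]
  rw [this]
  exact h

lemma mp_init (k : ℕ) :
    MeasurePreserving (Fin.init : (Fin (k + 1) → Z) → (Fin k → Z))
      (iid D (k + 1)) (iid D k) := by
  have h1 := MeasureTheory.measurePreserving_piFinSuccAbove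
    (fun _ : Fin (k + 1) => D) (Fin.last k)
  have h2 := (mp_snd D (Measure.pi fun _ : Fin k => D)).comp h1
  have : (Prod.snd ∘ (MeasurableEquiv.piFinSuccAbove (fun _ : Fin (k+1) => Z) (Fin.last k)))
      = (Fin.init : (Fin (k + 1) → Z) → (Fin k → Z)) := by
    funext S
    show Fin.removeNth (Fin.last k) S = Fin.init S
    simp
  show MeasurePreserving Fin.init (Measure.pi fun _ : Fin (k+1) => D) (Measure.pi fun _ : Fin k => D)
  rwa [this] at h2

lemma mp_update {k : ℕ} (i : Fin k) :
    MeasurePreserving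
      (fun p : (Fin k → Z) × Z => (Function.update p.1 i p.2, p.1 i))
      ((iid D k).prod D) ((iid D k).prod D) := by
  set σ : Equiv.Perm (Fin (k + 1)) := Equiv.swap (Fin.castSucc i) (Fin.last k) with hσ
  have h := ((mp_snocME D k).symm (snocME (Z := Z) k)).comp
    ((mp_perm D σ).comp (mp_snocME D k))
  have hfun : ((snocME (Z := Z) k).symm ∘ ((fun f => f ∘ σ) ∘ (snocME (Z := Z) k)))
      = fun p : (Fin k → Z) × Z => (Function.update p.1 i p.2, p.1 i) := by
    funext p
    obtain ⟨T, x⟩ := p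
    have hW : snocME (Z := Z) k (T, x) = Fin.snoc T x := snocME_apply _
    have hci : (Fin.castSucc i : Fin (k+1)) ≠ Fin.last k := Fin.ne_last_of_lt (Fin.castSucc_lt_last i)
    have key : (Fin.snoc T x ∘ σ) = Fin.snoc (Function.update T i x) (T i) := by
      funext l
      rcases Fin.eq_castSucc_or_eq_last l with ⟨j, rfl⟩ | rfl
      · by_cases hj : j = i
        · subst hj
          simp only [Function.comp_apply, hσ, Equiv.swap_apply_left]
          simp
        · have h1 : (Fin.castSucc j) ≠ Fin.castSucc i := by
            simpa [Fin.castSucc_inj] using hj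
          have h2 : (Fin.castSucc j) ≠ Fin.last k := Fin.ne_last_of_lt (Fin.castSucc_lt_last j)
          simp only [Function.comp_apply, hσ, Equiv.swap_apply_of_ne_of_ne h1 h2]
          simp [Function.update_apply, hj]
      · simp only [Function.comp_apply, hσ, Equiv.swap_apply_right]
        simp
    show (snocME (Z := Z) k).symm ((snocME (Z := Z) k (T, x)) ∘ σ) = _
    rw [hW, key, ← snocME_apply (Z := Z) (k := k) (Function.update T i x, T i)]
    exact (snocME (Z := Z) k).symm_apply_apply _
  rwa [hfun] at h


lemma abs_avg_le {k : ℕ} (hk : 1 ≤ k) (h : Fin k → ℝ) {B : ℝ} (hb : ∀ i, |h i| ≤ B) :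
    |(k : ℝ)⁻¹ * ∑ i, h i| ≤ B := by
  have hB : 0 ≤ B := le_trans (abs_nonneg _) (hb ⟨0, hk⟩)
  have hk' : (0 : ℝ) < (k : ℝ) := by exact_mod_cast hk
  rw [abs_mul, abs_inv, Nat.abs_cast]
  have h1 : |∑ i, h i| ≤ (k : ℝ) * B := by
    calc |∑ i, h i| ≤ ∑ i, |h i| := Finset.abs_sum_le_sum_abs _ _
      _ ≤ ∑ _i : Fin k, B := Finset.sum_le_sum fun i _ => hb i
      _ = (k : ℝ) * B := by simp [Finset.sum_const, Finset.card_univ, mul_comm]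
  calc (k : ℝ)⁻¹ * |∑ i, h i| ≤ (k : ℝ)⁻¹ * ((k : ℝ) * B) :=
        mul_le_mul_of_nonneg_left h1 (by positivity)
    _ = B := by field_simp

lemma abs_avg2_le {k : ℕ} (hk : 1 ≤ k) (h : Fin k → Fin k → ℝ) {B : ℝ}
    (hb : ∀ i j, |h i j| ≤ B) :
    |((k : ℝ) ^ 2)⁻¹ * ∑ i, ∑ j, h i j| ≤ B := by
  have hB : 0 ≤ B := le_trans (abs_nonneg _) (hb ⟨0, hk⟩ ⟨0, hk⟩)
  have hk' : (0 : ℝ) < (k : ℝ) := by exact_mod_cast hk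
  rw [abs_mul, abs_inv, abs_pow, Nat.abs_cast]
  have h1 : |∑ i, ∑ j, h i j| ≤ (k : ℝ) ^ 2 * B := by
    calc |∑ i, ∑ j, h i j| ≤ ∑ i, |∑ j, h i j| := Finset.abs_sum_le_sum_abs _ _
      _ ≤ ∑ _i : Fin k, (k : ℝ) * B := by
          refine Finset.sum_le_sum fun i _ => ?_
          calc |∑ j, h i j| ≤ ∑ j, |h i j| := Finset.abs_sum_le_sum_abs _ _
            _ ≤ ∑ _j : Fin k, B := Finset.sum_le_sum fun j _ => hb i j
            _ = (k : ℝ) * B := by simp [mul_comm]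
      _ = (k : ℝ) ^ 2 * B := by simp [mul_comm]; ring
  calc ((k : ℝ) ^ 2)⁻¹ * |∑ i, ∑ j, h i j| ≤ ((k : ℝ) ^ 2)⁻¹ * ((k : ℝ) ^ 2 * B) :=
        mul_le_mul_of_nonneg_left h1 (by positivity)
    _ = B := by field_simp

end OAVSaux

namespace OAVSaux

variable {Z : Type*} [MeasurableSpace Z] (D : Measure Z) [IsProbabilityMeasure D]

lemma stab_core {k : ℕ} (hk : 1 ≤ k) {F : (Fin k → Z) × Z → ℝ} (hFm : Measurable F)
    {C : ℝ} (hFb : ∀ p, |F p| ≤ C) :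
    |(∫ p, F p ∂((iid D k).prod D)) -
        ∫ p : (Fin k → Z) × Z, ((k : ℝ)⁻¹ * ∑ i : Fin k, F (p.1, p.1 i)) ∂((iid D k).prod D)|
      ≤ ∫ T, ∫ x',
          ((k : ℝ)⁻¹ * ∑ i : Fin k, |F (T, T i) - F (Function.update T i x', T i)|)
        ∂D ∂(iid D k) := by
  have hk0 : ((k : ℝ)) ≠ 0 := by positivity
  have int_up : ∀ i : Fin k, Integrable
      (fun p : (Fin k → Z) × Z => F (Function.update p.1 i p.2, p.1 i)) ((iid D k).prod D) :=
    fun i => integrable_bdd (by exact (hFm.comp ((mp_update D i).measurable)).aestronglyMeasurable)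
      (fun p => hFb _)
  have int_on : ∀ i : Fin k, Integrable
      (fun p : (Fin k → Z) × Z => F (p.1, p.1 i)) ((iid D k).prod D) :=
    fun i => integrable_bdd (by exact (hFm.comp
      (measurable_fst.prodMk ((measurable_pi_apply i).comp measurable_fst))).aestronglyMeasurable)
      (fun p => hFb _)
  have hup : ∀ i : Fin k, ∫ p : (Fin k → Z) × Z,
      F (Function.update p.1 i p.2, p.1 i) ∂((iid D k).prod D)
      = ∫ p, F p ∂((iid D k).prod D) :=
    fun i => integral_comp_mp (mp_update D i) hFm.aestronglyMeasurable
  have int_F1 : Integrable (fun p : (Fin k → Z) × Z =>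
      (k : ℝ)⁻¹ * ∑ i : Fin k, F (Function.update p.1 i p.2, p.1 i)) ((iid D k).prod D) :=
    ((integrable_finset_sum _ fun i _ => int_up i).const_mul _)
  have int_F2 : Integrable (fun p : (Fin k → Z) × Z =>
      (k : ℝ)⁻¹ * ∑ i : Fin k, F (p.1, p.1 i)) ((iid D k).prod D) :=
    ((integrable_finset_sum _ fun i _ => int_on i).const_mul _)
  have int_abs : Integrable (fun p : (Fin k → Z) × Z =>
      (k : ℝ)⁻¹ * ∑ i : Fin k, |F (p.1, p.1 i) - F (Function.update p.1 i p.2, p.1 i)|)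
      ((iid D k).prod D) :=
    ((integrable_finset_sum _ fun i _ => ((int_on i).sub (int_up i)).abs).const_mul _)
  have h1 : ∫ p, F p ∂((iid D k).prod D)
      = ∫ p : (Fin k → Z) × Z,
          ((k : ℝ)⁻¹ * ∑ i : Fin k, F (Function.update p.1 i p.2, p.1 i)) ∂((iid D k).prod D) := by
    rw [MeasureTheory.integral_const_mul, integral_finset_sum _ (fun i _ => int_up i),
      Finset.sum_congr rfl fun i _ => hup i, Finset.sum_const, Finset.card_univ]
    simp only [Fintype.card_fin, nsmul_eq_mul]
    rw [← mul_assoc, inv_mul_cancel₀ hk0, one_mul]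
  rw [h1, ← integral_sub int_F1 int_F2]
  have habs : |∫ p, ((fun p : (Fin k → Z) × Z =>
        (k : ℝ)⁻¹ * ∑ i : Fin k, F (Function.update p.1 i p.2, p.1 i)) p -
      (fun p : (Fin k → Z) × Z => (k : ℝ)⁻¹ * ∑ i : Fin k, F (p.1, p.1 i)) p)
        ∂((iid D k).prod D)|
      ≤ ∫ p : (Fin k → Z) × Z,
          ((k : ℝ)⁻¹ * ∑ i : Fin k, |F (p.1, p.1 i) - F (Function.update p.1 i p.2, p.1 i)|)
        ∂((iid D k).prod D) := by
    refine le_trans ?_ (integral_mono ((int_F1.sub int_F2).abs) int_abs ?_)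
    · have := norm_integral_le_integral_norm (μ := (iid D k).prod D)
        (f := fun p : (Fin k → Z) × Z =>
          ((k : ℝ)⁻¹ * ∑ i : Fin k, F (Function.update p.1 i p.2, p.1 i)) -
          ((k : ℝ)⁻¹ * ∑ i : Fin k, F (p.1, p.1 i)))
      simpa [Real.norm_eq_abs] using this
    · intro p
      have heq : ((k : ℝ)⁻¹ * ∑ i : Fin k, F (Function.update p.1 i p.2, p.1 i)) -
          ((k : ℝ)⁻¹ * ∑ i : Fin k, F (p.1, p.1 i))
          = (k : ℝ)⁻¹ * ∑ i : Fin k,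
              (F (Function.update p.1 i p.2, p.1 i) - F (p.1, p.1 i)) := by
        rw [← mul_sub, ← Finset.sum_sub_distrib]
      show |(((k : ℝ)⁻¹ * ∑ i : Fin k, F (Function.update p.1 i p.2, p.1 i)) -
          ((k : ℝ)⁻¹ * ∑ i : Fin k, F (p.1, p.1 i)))| ≤ _
      rw [heq, abs_mul, abs_inv, Nat.abs_cast]
      refine mul_le_mul_of_nonneg_left ?_ (by positivity)
      refine le_trans (Finset.abs_sum_le_sum_abs _ _) (Finset.sum_le_sum fun i _ => ?_)
      rw [abs_sub_comm]
  refine le_trans habs (le_of_eq ?_)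
  exact (MeasureTheory.integral_integral (f := fun T x' =>
    (k : ℝ)⁻¹ * ∑ i : Fin k, |F (T, T i) - F (Function.update T i x', T i)|) int_abs).symm

end OAVSaux

/-- an OAROS-stable ERM-like algorithm is
On-Average-Validation-Stable with rate `(3 + 1/m)·ε1(n) + ε2(n)`. -/
theorem stmt_0 {Z H : Type*} [MeasurableSpace Z] (ℓ : H → Z → ℝ)
    (A : ∀ k : ℕ, (Fin k → Z) → H) (ε1 ε2 : ℕ → ℝ)
    (hℓ : ∀ (h : H) (z : Z), 0 ≤ ℓ h z)
    (hsym : IsSymmetricAlg A) (hmb : MeasBddAlg ℓ A)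
    (hst : OAROS ℓ A ε1)
    (D : Measure Z) [IsProbabilityMeasure D]
    (hε2 : Antitone ε2)
    (herm : ∀ n : ℕ, 1 ≤ n →
      ∫ T',
          ((n : ℝ)⁻¹ * ∑ i : Fin n, ℓ (A n (Fin.init T')) (Fin.init T' i) -
            ((n + 1 : ℕ) : ℝ)⁻¹ * ∑ i : Fin (n + 1), ℓ (A (n + 1) T') (T' i))
        ∂(iid D (n + 1)) ≤ ε2 n) :
    ∀ n m : ℕ, 1 ≤ n → 1 ≤ m →
      ∫ T, ∫ V,
          ((m : ℝ) ^ 2)⁻¹ * ∑ i : Fin m, ∑ j : Fin m,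
            (ℓ (A n T) (V j) - ℓ (A (n + 1) (Fin.snoc T (V i))) (V j))
        ∂(iid D m) ∂(iid D n)
      ≤ (3 + (m : ℝ)⁻¹) * ε1 n + ε2 n := by
  classical
  intro n m hn hm
  open OAVSaux in
  obtain ⟨hfm, Cf, hCf⟩ := hmb n
  obtain ⟨hgm, Cg, hCg⟩ := hmb (n + 1)
  have hfabs : ∀ (T : Fin n → Z) (z : Z), |ℓ (A n T) z| ≤ Cf := fun T z => by
    rw [abs_of_nonneg (hℓ _ _)]; exact hCf T z
  have hgabs : ∀ (S : Fin (n + 1) → Z) (z : Z), |ℓ (A (n + 1) S) z| ≤ Cg := fun S z => by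
    rw [abs_of_nonneg (hℓ _ _)]; exact hCg S z
  -- the five key real numbers
  set a : ℝ := ∫ p : (Fin n → Z) × Z, ℓ (A n p.1) p.2 ∂((iid D n).prod D) with ha
  set b : ℝ := ∫ p : (Fin (n + 1) → Z) × Z, ℓ (A (n + 1) p.1) p.2 ∂((iid D (n + 1)).prod D)
    with hb
  set c : ℝ := ∫ S : Fin (n + 1) → Z, ℓ (A (n + 1) S) (S (Fin.last n)) ∂(iid D (n + 1)) with hc
  set d : ℝ := ∫ T : Fin n → Z, (n : ℝ)⁻¹ * ∑ i : Fin n, ℓ (A n T) (T i) ∂(iid D n) with hd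
  set eE : ℝ := ∫ S : Fin (n + 1) → Z,
    ((n + 1 : ℕ) : ℝ)⁻¹ * ∑ i : Fin (n + 1), ℓ (A (n + 1) S) (S i) ∂(iid D (n + 1)) with he
  -- shared infrastructure
  have hgk_meas : ∀ k : Fin (n + 1), Measurable (fun S : Fin (n + 1) → Z => ℓ (A (n + 1) S) (S k)) :=
    fun k => by exact hgm.comp (measurable_id.prodMk (measurable_pi_apply k))
  have hgk_int : ∀ k : Fin (n + 1),
      Integrable (fun S : Fin (n + 1) → Z => ℓ (A (n + 1) S) (S k)) (iid D (n + 1)) :=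
    fun k => integrable_bdd (hgk_meas k).aestronglyMeasurable (fun S => hgabs _ _)
  have hGd_meas : Measurable (fun T : Fin n → Z => (n : ℝ)⁻¹ * ∑ i : Fin n, ℓ (A n T) (T i)) := by
    apply Measurable.const_mul
    exact Finset.measurable_sum _ fun i _ => by
      exact hfm.comp (measurable_id.prodMk (measurable_pi_apply i))
  have hGe_meas : Measurable (fun S : Fin (n + 1) → Z =>
      ((n + 1 : ℕ) : ℝ)⁻¹ * ∑ i : Fin (n + 1), ℓ (A (n + 1) S) (S i)) := by
    apply Measurable.const_mul
    exact Finset.measurable_sum _ fun i _ => hgk_meas i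
  have hdp : ∫ p : (Fin n → Z) × Z,
      ((n : ℝ)⁻¹ * ∑ i : Fin n, ℓ (A n p.1) (p.1 i)) ∂((iid D n).prod D) = d :=
    integral_comp_mp (mp_fst (iid D n) D) hGd_meas.aestronglyMeasurable
  have hep : ∫ p : (Fin (n + 1) → Z) × Z,
      (((n + 1 : ℕ) : ℝ)⁻¹ * ∑ i : Fin (n + 1), ℓ (A (n + 1) p.1) (p.1 i))
      ∂((iid D (n + 1)).prod D) = eE :=
    integral_comp_mp (mp_fst (iid D (n + 1)) D) hGe_meas.aestronglyMeasurable
  -- Step 1 : the LHS equals a - c/m - (1 - 1/m) b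
  have hS1 : ∫ T, ∫ V,
          ((m : ℝ) ^ 2)⁻¹ * ∑ i : Fin m, ∑ j : Fin m,
            (ℓ (A n T) (V j) - ℓ (A (n + 1) (Fin.snoc T (V i))) (V j))
        ∂(iid D m) ∂(iid D n)
      = ((m : ℝ) ^ 2)⁻¹ * ((m : ℝ) ^ 2 * a - (m : ℝ) * c - ((m : ℝ) ^ 2 - (m : ℝ)) * b) := by
    set P := (iid D n).prod (iid D m) with hP
    have int_t1 : ∀ j : Fin m,
        Integrable (fun q : (Fin n → Z) × (Fin m → Z) => ℓ (A n q.1) (q.2 j)) P :=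
      fun j => integrable_bdd (by exact (hfm.comp (measurable_fst.prodMk
        ((measurable_pi_apply j).comp measurable_snd))).aestronglyMeasurable)
        (fun q => hfabs _ _)
    have int_t2 : ∀ i j : Fin m, Integrable
        (fun q : (Fin n → Z) × (Fin m → Z) => ℓ (A (n + 1) (Fin.snoc q.1 (q.2 i))) (q.2 j)) P :=
      fun i j => integrable_bdd (by exact (hgm.comp
        ((((mp_snoc D n).measurable.comp (measurable_fst.prodMk
          ((measurable_pi_apply i).comp measurable_snd)))).prodMk
          ((measurable_pi_apply j).comp measurable_snd))).aestronglyMeasurable)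
        (fun q => hgabs _ _)
    have int_term : ∀ i j : Fin m, Integrable (fun q : (Fin n → Z) × (Fin m → Z) =>
        ℓ (A n q.1) (q.2 j) - ℓ (A (n + 1) (Fin.snoc q.1 (q.2 i))) (q.2 j)) P :=
      fun i j => (int_t1 j).sub (int_t2 i j)
    have int_inner : ∀ i : Fin m, Integrable (fun q : (Fin n → Z) × (Fin m → Z) =>
        ∑ j : Fin m, (ℓ (A n q.1) (q.2 j) - ℓ (A (n + 1) (Fin.snoc q.1 (q.2 i))) (q.2 j))) P :=
      fun i => integrable_finset_sum _ fun j _ => int_term i j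
    have int_big : Integrable (fun q : (Fin n → Z) × (Fin m → Z) =>
        ((m : ℝ) ^ 2)⁻¹ * ∑ i : Fin m, ∑ j : Fin m,
          (ℓ (A n q.1) (q.2 j) - ℓ (A (n + 1) (Fin.snoc q.1 (q.2 i))) (q.2 j))) P :=
      ((integrable_finset_sum _ fun i _ => int_inner i).const_mul _)
    have hval1 : ∀ j : Fin m, ∫ q : (Fin n → Z) × (Fin m → Z), ℓ (A n q.1) (q.2 j) ∂P = a :=
      fun j => integral_comp_mp
        ((MeasurePreserving.id (iid D n)).prod (mp_eval D (k := m) j))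
        hfm.aestronglyMeasurable
    have hval2eq : ∀ i : Fin m,
        ∫ q : (Fin n → Z) × (Fin m → Z), ℓ (A (n + 1) (Fin.snoc q.1 (q.2 i))) (q.2 i) ∂P = c := by
      intro i
      have hmp := (mp_snoc D n).comp
        ((MeasurePreserving.id (iid D n)).prod (mp_eval D (k := m) i))
      have h := integral_comp_mp hmp
        (G := fun S : Fin (n + 1) → Z => ℓ (A (n + 1) S) (S (Fin.last n)))
        (hgk_meas (Fin.last n)).aestronglyMeasurable
      refine Eq.trans ?_ h
      apply integral_congr_ae
      filter_upwards with q
      have hq : ℓ (A (n + 1) (Fin.snoc q.1 (q.2 i)))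
            ((Fin.snoc (α := fun _ => Z) q.1 (q.2 i)) (Fin.last n))
          = ℓ (A (n + 1) (Fin.snoc q.1 (q.2 i))) (q.2 i) := by
        rw [Fin.snoc_last]
      exact hq.symm
    have hval2ne : ∀ i j : Fin m, j ≠ i →
        ∫ q : (Fin n → Z) × (Fin m → Z), ℓ (A (n + 1) (Fin.snoc q.1 (q.2 i))) (q.2 j) ∂P = b := by
      intro i j hij
      have hmp := ((mp_snoc D n).prod (MeasurePreserving.id D)).comp
        (((measurePreserving_prodAssoc (iid D n) D D).symm).comp
          ((MeasurePreserving.id (iid D n)).prod (mp_pair D (fun h => hij h.symm))))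
      have h := integral_comp_mp hmp hgm.aestronglyMeasurable
      refine Eq.trans ?_ h
      apply integral_congr_ae
      filter_upwards with q
      rfl
    have hA : ∫ T, ∫ V,
          ((m : ℝ) ^ 2)⁻¹ * ∑ i : Fin m, ∑ j : Fin m,
            (ℓ (A n T) (V j) - ℓ (A (n + 1) (Fin.snoc T (V i))) (V j))
        ∂(iid D m) ∂(iid D n)
        = ∫ q : (Fin n → Z) × (Fin m → Z),
            (((m : ℝ) ^ 2)⁻¹ * ∑ i : Fin m, ∑ j : Fin m,
              (ℓ (A n q.1) (q.2 j) - ℓ (A (n + 1) (Fin.snoc q.1 (q.2 i))) (q.2 j))) ∂P :=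
      MeasureTheory.integral_integral (μ := iid D n) (ν := iid D m) (f := fun T V =>
        ((m : ℝ) ^ 2)⁻¹ * ∑ i : Fin m, ∑ j : Fin m,
          (ℓ (A n T) (V j) - ℓ (A (n + 1) (Fin.snoc T (V i))) (V j))) (by exact int_big)
    have hB : ∫ q : (Fin n → Z) × (Fin m → Z),
          (((m : ℝ) ^ 2)⁻¹ * ∑ i : Fin m, ∑ j : Fin m,
            (ℓ (A n q.1) (q.2 j) - ℓ (A (n + 1) (Fin.snoc q.1 (q.2 i))) (q.2 j))) ∂P
        = ((m : ℝ) ^ 2)⁻¹ * ∑ i : Fin m, ∑ j : Fin m,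
            ∫ q : (Fin n → Z) × (Fin m → Z),
              (ℓ (A n q.1) (q.2 j) - ℓ (A (n + 1) (Fin.snoc q.1 (q.2 i))) (q.2 j)) ∂P := by
      rw [MeasureTheory.integral_const_mul]
      congr 1
      rw [integral_finset_sum _ (fun i _ => int_inner i)]
      exact Finset.sum_congr rfl fun i _ => integral_finset_sum _ (fun j _ => int_term i j)
    have hterm : ∀ i j : Fin m, ∫ q : (Fin n → Z) × (Fin m → Z),
          (ℓ (A n q.1) (q.2 j) - ℓ (A (n + 1) (Fin.snoc q.1 (q.2 i))) (q.2 j)) ∂P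
        = a - (if j = i then c else b) := by
      intro i j
      rw [integral_sub (int_t1 j) (int_t2 i j), hval1 j]
      congr 1
      by_cases hij : j = i
      · rw [if_pos hij]; subst hij; exact hval2eq j
      · rw [if_neg hij]; exact hval2ne i j hij
    rw [hA, hB]
    congr 1
    rw [Finset.sum_congr rfl fun i (_ : i ∈ Finset.univ) =>
      Finset.sum_congr rfl fun j (_ : j ∈ Finset.univ) => hterm i j]
    have hrow : ∀ i : Fin m, ∑ j : Fin m, (a - if j = i then c else b)
        = (m : ℝ) * a - c - ((m : ℝ) - 1) * b := by
      intro i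
      rw [Finset.sum_sub_distrib]
      have hsp : ∀ j : Fin m, (if j = i then c else b) = b + (if j = i then c - b else 0) :=
        fun j => by split <;> ring
      rw [Finset.sum_congr rfl fun j _ => hsp j, Finset.sum_add_distrib,
        Finset.sum_ite_eq' Finset.univ i fun _ => c - b]
      simp only [Finset.sum_const, Finset.card_univ, Fintype.card_fin, nsmul_eq_mul,
        Finset.mem_univ, if_pos]
      ring
    rw [Finset.sum_congr rfl fun i (_ : i ∈ Finset.univ) => hrow i, Finset.sum_const,
      Finset.card_univ]
    simp only [Fintype.card_fin, nsmul_eq_mul]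
    ring
  -- Step 2 : c = eE
  have hS2 : c = eE := by
    have hck : ∀ k : Fin (n + 1),
        ∫ S, ℓ (A (n + 1) S) (S k) ∂(iid D (n + 1)) = c := by
      intro k
      have hσ := mp_perm D (Equiv.swap k (Fin.last n))
      have h := integral_comp_mp hσ
        (G := fun S : Fin (n + 1) → Z => ℓ (A (n + 1) S) (S k))
        (hgk_meas k).aestronglyMeasurable
      have h2 : ∫ S : Fin (n + 1) → Z,
          ℓ (A (n + 1) (S ∘ (Equiv.swap k (Fin.last n))))
            ((S ∘ (Equiv.swap k (Fin.last n))) k) ∂(iid D (n + 1)) = c := by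
        rw [hc]
        apply integral_congr_ae
        filter_upwards with S
        rw [hsym (n + 1) (Equiv.swap k (Fin.last n)) S]
        simp [Equiv.swap_apply_left]
      exact h.symm.trans h2
    rw [he]
    rw [MeasureTheory.integral_const_mul, integral_finset_sum _ (fun k _ => hgk_int k),
      Finset.sum_congr rfl fun k _ => hck k, Finset.sum_const, Finset.card_univ]
    simp only [Fintype.card_fin, nsmul_eq_mul]
    rw [← mul_assoc, inv_mul_cancel₀ (by positivity), one_mul]
  -- Step 3 : a - d ≤ ε1 n
  have hS3 : a - d ≤ ε1 n := by
    have hstab := stab_core D hn hfm (C := Cf) (fun p => hfabs _ _)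
    rw [hdp] at hstab
    have := (abs_le.1 hstab).2
    refine le_trans (by linarith) (hst.2 D inferInstance n hn)
  -- Step 4 : d - eE ≤ ε2 n
  have hS4 : d - eE ≤ ε2 n := by
    have h := herm n hn
    have intX : Integrable (fun T' : Fin (n + 1) → Z =>
        (n : ℝ)⁻¹ * ∑ i : Fin n, ℓ (A n (Fin.init T')) (Fin.init T' i)) (iid D (n + 1)) :=
      integrable_bdd (by exact (hGd_meas.comp (mp_init D n).measurable).aestronglyMeasurable)
        (fun S => abs_avg_le hn _ (fun i => hfabs _ _))
    have intY : Integrable (fun S : Fin (n + 1) → Z =>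
        ((n + 1 : ℕ) : ℝ)⁻¹ * ∑ i : Fin (n + 1), ℓ (A (n + 1) S) (S i)) (iid D (n + 1)) :=
      integrable_bdd hGe_meas.aestronglyMeasurable
        (fun S => abs_avg_le (Nat.le_add_left 1 n) _ (fun i => hgabs _ _))
    rw [integral_sub intX intY] at h
    have hX : ∫ T', ((n : ℝ)⁻¹ * ∑ i : Fin n, ℓ (A n (Fin.init T')) (Fin.init T' i))
        ∂(iid D (n + 1)) = d :=
      integral_comp_mp (mp_init D n) hGd_meas.aestronglyMeasurable
    rw [hX, ← he] at h
    exact h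
  -- Step 5 : |b - eE| ≤ ε1 n
  have hstabN := stab_core D (Nat.le_add_left 1 n) hgm (C := Cg) (fun p => hgabs _ _)
  have hOA := hst.2 D inferInstance (n + 1) (Nat.le_add_left 1 n)
  have hstabN' : |b - eE| ≤ ε1 (n + 1) := by
    rw [hep] at hstabN
    exact le_trans hstabN hOA
  have hmono1 : ε1 (n + 1) ≤ ε1 n := hst.1 (Nat.le_succ n)
  have hS5a : b - eE ≤ ε1 n := le_trans (le_trans (le_abs_self _) hstabN') hmono1
  have hS5b : eE - b ≤ ε1 n := by
    have := (abs_le.1 hstabN').1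
    linarith
  -- Step 6 : 0 ≤ ε1 n
  have hS6 : 0 ≤ ε1 n := by
    refine le_trans ?_ (hst.2 D inferInstance n hn)
    refine integral_nonneg fun T => integral_nonneg fun x => ?_
    positivity
  -- final assembly
  rw [hS1]
  have hM : (1 : ℝ) ≤ (m : ℝ) := by exact_mod_cast hm
  have hM0 : (0 : ℝ) < (m : ℝ) := lt_of_lt_of_le one_pos hM
  have key : ((m : ℝ) ^ 2)⁻¹ * ((m : ℝ) ^ 2 * a - (m : ℝ) * c - ((m : ℝ) ^ 2 - (m : ℝ)) * b)
      = (a - d) + (d - eE) + (eE - b) + (m : ℝ)⁻¹ * (b - eE) := by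
    rw [hS2]
    field_simp
    ring
  have hbc : (m : ℝ)⁻¹ * (b - eE) ≤ (m : ℝ)⁻¹ * ε1 n :=
    mul_le_mul_of_nonneg_left hS5a (by positivity)
  have hinv : (m : ℝ)⁻¹ ≤ 1 := by
    rw [inv_le_one_iff₀]; right; exact hM
  have hR : (3 + (m : ℝ)⁻¹) * ε1 n = 3 * ε1 n + (m : ℝ)⁻¹ * ε1 n := by ring
  have hmono : (m : ℝ)⁻¹ * ε1 n ≤ 1 * ε1 n :=
    mul_le_mul_of_nonneg_right hinv hS6
  linarith [hS3, hS4, hS5b, hbc]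
end
end

section
/- If the learning algorithm A is OAROS with rate ε1, then for every probability measure D on Z and every n ≥ 1, E_{T~D^n} [ L_D(A_n(T)) − L_T(A_n(T)) ] ≤ ε1(n). -/
/-!
Exchanging the `i`-th sample point with an independent fresh point `x'` preserves the law of
`(T, x')`: under `(T, x') ↦ Fin.snoc T x'` it is a transposition of the coordinates of an i.i.d.
tuple. Hence `E ℓ(A(T^{i←x'}), T_i) = E L_D(A(T))` for every `i`, and averaging over `i` turns the
expected generalization gap into `E (1/n) Σ_i [ℓ(A(T^{i←x'}), T_i) - ℓ(A(T), T_i)]`, which is at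
most the on-average replace-one stability quantity.
-/

open MeasureTheory

noncomputable section

namespace LearningTheory

variable {Z : Type*} {n : ℕ}

def swapWithFresh (i : Fin n) (p : (Fin n → Z) × Z) : (Fin n → Z) × Z :=
  (Function.update p.1 i p.2, p.1 i)

theorem swapWithFresh_involutive (i : Fin n) :
    Function.Involutive (swapWithFresh (Z := Z) i) := by
  rintro ⟨T, x⟩
  simp [swapWithFresh]

theorem swapWithFresh_eq_snoc_swap (i : Fin n) (T : Fin n → Z) (x : Z) :
    swapWithFresh i (T, x) =
      (Fin.init ((Fin.snoc T x : Fin (n + 1) → Z) ∘ Equiv.swap i.castSucc (Fin.last n)),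
        (Fin.snoc T x : Fin (n + 1) → Z) i.castSucc) := by
  refine Prod.ext (funext fun j => ?_) ?_
  · rcases eq_or_ne j i with rfl | hji
    · simp [swapWithFresh, Fin.init]
    · have h1 : j.castSucc ≠ i.castSucc := by simpa using hji
      simp [swapWithFresh, Fin.init, Equiv.swap_apply_of_ne_of_ne h1 (Fin.castSucc_lt_last j).ne,
        hji]
  · simp [swapWithFresh]

variable [MeasurableSpace Z]

theorem measurable_swapWithFresh (i : Fin n) : Measurable (swapWithFresh (Z := Z) i) :=
  measurable_update'.prodMk ((measurable_pi_apply i).comp measurable_fst)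

instance (μ : Measure Z) [SigmaFinite μ] : SigmaFinite (iid μ n) := by
  unfold iid; infer_instance

instance (μ : Measure Z) [IsProbabilityMeasure μ] : IsProbabilityMeasure (iid μ n) := by
  unfold iid; infer_instance

theorem measurePreserving_comp_perm (μ : Measure Z) [SigmaFinite μ] (σ : Equiv.Perm (Fin n)) :
    MeasurePreserving (fun V : Fin n → Z => V ∘ σ) (iid μ n) (iid μ n) := by
  unfold iid
  convert measurePreserving_piCongrLeft (fun _ => μ) σ.symm using 1
  funext V b
  simp [MeasurableEquiv.coe_piCongrLeft, Equiv.piCongrLeft_apply_eq_cast]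

theorem measurePreserving_swapWithFresh (μ : Measure Z) [SigmaFinite μ] (i : Fin n) :
    MeasurePreserving (swapWithFresh i) ((iid μ n).prod μ) ((iid μ n).prod μ) := by
  let e := MeasurableEquiv.piFinSuccAbove (fun _ : Fin (n + 1) => Z) (Fin.last n)
  have he : MeasurePreserving e (iid μ (n + 1)) (μ.prod (iid μ n)) :=
    measurePreserving_piFinSuccAbove (fun _ => μ) _
  have hσ := measurePreserving_comp_perm μ (Equiv.swap i.castSucc (Fin.last n))
  have key : swapWithFresh i = Prod.swap ∘ e ∘ (· ∘ Equiv.swap i.castSucc (Fin.last n)) ∘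
      e.symm ∘ Prod.swap := by
    funext ⟨T, x⟩
    rw [swapWithFresh_eq_snoc_swap]
    simp [e, MeasurableEquiv.piFinSuccAbove, Fin.snocEquiv]
  rw [key]
  exact Measure.measurePreserving_swap.comp (he.comp (hσ.comp ((he.symm e).comp
    Measure.measurePreserving_swap)))

theorem integral_comp_swapWithFresh {E : Type*} [NormedAddCommGroup E] [NormedSpace ℝ E]
    (μ : Measure Z) [SigmaFinite μ] (i : Fin n) (f : (Fin n → Z) × Z → E) :
    ∫ p, f (swapWithFresh i p) ∂(iid μ n).prod μ = ∫ p, f p ∂(iid μ n).prod μ :=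
  MeasurePreserving.integral_comp'
    (f := MeasurableEquiv.ofInvolutive _ (swapWithFresh_involutive i) (measurable_swapWithFresh i))
    (measurePreserving_swapWithFresh μ i) f

theorem integrable_comp_of_abs_le {α β : Type*} [MeasurableSpace α] [MeasurableSpace β]
    {ν : Measure α} [IsFiniteMeasure ν] {f : β → ℝ} (hf : Measurable f) {C : ℝ}
    (hC : ∀ b, |f b| ≤ C) {φ : α → β} (hφ : Measurable φ) :
    Integrable (fun a => f (φ a)) ν :=
  .of_bound (hf.comp hφ).aestronglyMeasurable C (ae_of_all _ fun _ => hC _)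

section Gap

variable (μ : Measure Z) [IsProbabilityMeasure μ] {f : (Fin n → Z) × Z → ℝ} {C : ℝ}

theorem integrable_comp_sample (hf : Measurable f) (hC : ∀ p, |f p| ≤ C) (i : Fin n) :
    Integrable (fun p : (Fin n → Z) × Z => f (p.1, p.1 i)) ((iid μ n).prod μ) :=
  integrable_comp_of_abs_le hf hC
    (measurable_fst.prodMk ((measurable_pi_apply i).comp measurable_fst))

theorem integrable_comp_swapWithFresh (hf : Measurable f) (hC : ∀ p, |f p| ≤ C) (i : Fin n) :
    Integrable (fun p => f (swapWithFresh i p)) ((iid μ n).prod μ) :=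
  integrable_comp_of_abs_le hf hC (measurable_swapWithFresh i)

theorem integral_risk_sub_empiricalRisk_eq (hf : Measurable f) (hC : ∀ p, |f p| ≤ C)
    (hn : n ≠ 0) :
    ∫ T, ((∫ z, f (T, z) ∂μ) - (n : ℝ)⁻¹ * ∑ i, f (T, T i)) ∂(iid μ n) =
      ∫ p, (n : ℝ)⁻¹ * ∑ i, (f (swapWithFresh i p) - f (p.1, p.1 i)) ∂(iid μ n).prod μ := by
  have hf_int : Integrable f ((iid μ n).prod μ) := integrable_comp_of_abs_le hf hC measurable_id
  have hsample := integrable_comp_sample μ hf hC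
  have hswap := integrable_comp_swapWithFresh μ hf hC
  have hdiff : ∀ i : Fin n, Integrable (fun p => f (swapWithFresh i p) - f (p.1, p.1 i))
      ((iid μ n).prod μ) := fun i => (hswap i).sub (hsample i)
  have hemp : Integrable (fun p : (Fin n → Z) × Z => (n : ℝ)⁻¹ * ∑ i, f (p.1, p.1 i))
      ((iid μ n).prod μ) := (integrable_finsetSum _ fun i _ => hsample i).const_mul _
  calc ∫ T, ((∫ z, f (T, z) ∂μ) - (n : ℝ)⁻¹ * ∑ i, f (T, T i)) ∂(iid μ n)
      = ∫ p, (f p - (n : ℝ)⁻¹ * ∑ i, f (p.1, p.1 i)) ∂(iid μ n).prod μ := by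
        refine Eq.trans ?_ (integral_prod _ (hf_int.sub hemp)).symm
        refine integral_congr_ae (ae_of_all _ fun T => ?_)
        simp only [Pi.sub_apply]
        rw [integral_sub (integrable_comp_of_abs_le hf hC measurable_prodMk_left)
          (integrable_const _), integral_const]
        simp
    _ = ∫ p, f p ∂(iid μ n).prod μ -
          (n : ℝ)⁻¹ * ∑ i, ∫ p, f (p.1, p.1 i) ∂(iid μ n).prod μ := by
        rw [integral_sub hf_int hemp, integral_const_mul, integral_finsetSum _ fun i _ => hsample i]
    _ = (n : ℝ)⁻¹ * ∑ i, (∫ p, f (swapWithFresh i p) ∂(iid μ n).prod μ -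
          ∫ p, f (p.1, p.1 i) ∂(iid μ n).prod μ) := by
        simp only [integral_comp_swapWithFresh, Finset.sum_sub_distrib, Finset.sum_const,
          Finset.card_univ, Fintype.card_fin, nsmul_eq_mul, mul_sub]
        rw [inv_mul_cancel_left₀ (Nat.cast_ne_zero.mpr hn)]
    _ = ∫ p, (n : ℝ)⁻¹ * ∑ i, (f (swapWithFresh i p) - f (p.1, p.1 i)) ∂(iid μ n).prod μ := by
        rw [integral_const_mul, integral_finsetSum _ fun i _ => hdiff i]
        simp only [integral_sub (hswap _) (hsample _)]

theorem integral_risk_sub_empiricalRisk_le (hf : Measurable f) (hC : ∀ p, |f p| ≤ C)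
    (hn : n ≠ 0) :
    ∫ T, ((∫ z, f (T, z) ∂μ) - (n : ℝ)⁻¹ * ∑ i, f (T, T i)) ∂(iid μ n) ≤
      ∫ T, ∫ x, (n : ℝ)⁻¹ * ∑ i, |f (T, T i) - f (Function.update T i x, T i)| ∂μ ∂(iid μ n) := by
  have hsample := integrable_comp_sample μ hf hC
  have hswap := integrable_comp_swapWithFresh μ hf hC
  have habs : Integrable
      (fun p => (n : ℝ)⁻¹ * ∑ i, |f (p.1, p.1 i) - f (swapWithFresh i p)|) ((iid μ n).prod μ) :=
    (integrable_finsetSum _ fun i _ => ((hsample i).sub (hswap i)).abs).const_mul _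
  rw [integral_risk_sub_empiricalRisk_eq μ hf hC hn]
  refine (integral_mono ((integrable_finsetSum _ fun i _ => (hswap i).sub (hsample i)).const_mul _)
    habs fun p => ?_).trans_eq (integral_prod _ habs)
  gcongr with i
  exact abs_sub_comm (f (p.1, p.1 i)) _ ▸ le_abs_self _

end Gap

end LearningTheory

theorem stmt_1_general {Z H : Type*} [MeasurableSpace Z] (ℓ : H → Z → ℝ)
    (A : ∀ k : ℕ, (Fin k → Z) → H) (ε1 : ℕ → ℝ)
    (hℓ : ∀ (h : H) (z : Z), 0 ≤ ℓ h z)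
    (hmb : MeasBddAlg ℓ A)
    (hst : OAROS ℓ A ε1)
    (D : Measure Z) [IsProbabilityMeasure D] (n : ℕ) (hn : 1 ≤ n) :
    ∫ T,
        ((∫ z, ℓ (A n T) z ∂D) - (n : ℝ)⁻¹ * ∑ i : Fin n, ℓ (A n T) (T i))
      ∂(iid D n) ≤ ε1 n := by
  obtain ⟨hmeas, C, hC⟩ := hmb n
  have habs : ∀ p : (Fin n → Z) × Z, |ℓ (A n p.1) p.2| ≤ C := fun p =>
    (abs_of_nonneg (hℓ _ _)).trans_le (hC p.1 p.2)
  exact (LearningTheory.integral_risk_sub_empiricalRisk_le D hmeas habs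
    (Nat.one_le_iff_ne_zero.mp hn)).trans
    (hst.2 D inferInstance n hn)

/-- an OAROS-stable algorithm does not overfit on average:
`E_T [ L_D(A_n(T)) − L_T(A_n(T)) ] ≤ ε1(n)`. -/
theorem stmt_1 {Z H : Type*} [MeasurableSpace Z] (ℓ : H → Z → ℝ)
    (A : ∀ k : ℕ, (Fin k → Z) → H) (ε1 : ℕ → ℝ)
    (hℓ : ∀ (h : H) (z : Z), 0 ≤ ℓ h z)
    (hsym : IsSymmetricAlg A) (hmb : MeasBddAlg ℓ A)
    (hst : OAROS ℓ A ε1)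
    (D : Measure Z) [IsProbabilityMeasure D] (n : ℕ) (hn : 1 ≤ n) :
    ∫ T,
        ((∫ z, ℓ (A n T) z ∂D) - (n : ℝ)⁻¹ * ∑ i : Fin n, ℓ (A n T) (T i))
      ∂(iid D n) ≤ ε1 n :=
  stmt_1_general ℓ A ε1 hℓ hmb hst D n hn
end
end

section
/- If the learning algorithm A is OAROS with rate ε1, then for every probability measure D on Z and every n ≥ 1, | E_{T~D^n} E_{y~D} E_{y'~D} [ ℓ(A_{n+1}(T ⊕ y'), y) − ℓ(A_{n+1}(T ⊕ y), y) ] | ≤ ε1(n). -/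
open MeasureTheory

noncomputable section

/-! The integrand, taken in absolute value, is the replace-one loss gap of the sample `T ⊕ y`
at its last point with replacement `y'`; since `T ⊕ y ~ D^(n+1)`, the left-hand side is at most
`E |ℓ(A S, S_last) - ℓ(A S^(last←y'), S_last)|` for `S ~ D^(n+1)`. Symmetry of `A` and
exchangeability of `D^(n+1)` make this expectation the same at every coordinate, so it equals the
coordinate average that OAROS bounds by `ε1 (n+1) ≤ ε1 n`. -/

section

variable {Z H : Type*}

section ReplaceOne

variable {ℓ : H → Z → ℝ} {A : ∀ k : ℕ, (Fin k → Z) → H} {k : ℕ}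

variable (ℓ A) in
def replaceOneGap (k : ℕ) (i : Fin k) (p : (Fin k → Z) × Z) : ℝ :=
  |ℓ (A k p.1) (p.1 i) - ℓ (A k (Function.update p.1 i p.2)) (p.1 i)|

theorem replaceOneGap_comp_perm (hsym : IsSymmetricAlg A) (σ : Equiv.Perm (Fin k)) (i : Fin k)
    (S : Fin k → Z) (x : Z) :
    replaceOneGap ℓ A k i (S ∘ σ, x) = replaceOneGap ℓ A k (σ i) (S, x) := by
  simp only [replaceOneGap, ← Function.update_comp_eq_of_injective S σ.injective, hsym k σ,
    Function.comp_apply]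

theorem replaceOneGap_snoc_last (T : Fin k → Z) (y y' : Z) :
    replaceOneGap ℓ A (k + 1) (Fin.last k) (Fin.snoc T y, y')
      = |ℓ (A (k + 1) (Fin.snoc T y')) y - ℓ (A (k + 1) (Fin.snoc T y)) y| := by
  simp only [replaceOneGap, Fin.snoc_last, Fin.update_snoc_last]
  exact abs_sub_comm _ _

theorem abs_loss_sub_le (hℓ : ∀ h z, 0 ≤ ℓ h z) {C : ℝ} (hC : ∀ S z, ℓ (A k S) z ≤ C)
    (S S' : Fin k → Z) (z : Z) : |ℓ (A k S) z - ℓ (A k S') z| ≤ C :=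
  abs_sub_le_of_nonneg_of_le (hℓ _ _) (hC S z) (hℓ _ _) (hC S' z)

end ReplaceOne

variable [MeasurableSpace Z]

instance (D : Measure Z) [IsProbabilityMeasure D] (n : ℕ) : IsProbabilityMeasure (iid D n) := by
  unfold iid
  infer_instance

theorem MeasureTheory.MeasurePreserving.integral_comp_of_measurable {α β : Type*}
    [MeasurableSpace α] [MeasurableSpace β] {μ : Measure α} {ν : Measure β} {f : α → β}
    (hf : MeasurePreserving f μ ν) {g : β → ℝ} (hg : Measurable g) :
    ∫ x, g (f x) ∂μ = ∫ y, g y ∂ν := by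
  rw [← hf.map_eq, integral_map hf.measurable.aemeasurable hg.aestronglyMeasurable]

section Sampling

variable (D : Measure Z) [SigmaFinite D]

theorem measurePreserving_comp_perm {k : ℕ} (σ : Equiv.Perm (Fin k)) :
    MeasurePreserving (fun S : Fin k → Z => S ∘ σ) (iid D k) (iid D k) := by
  unfold iid
  convert measurePreserving_piCongrLeft (fun _ : Fin k => D) σ.symm
  ext S
  simp [MeasurableEquiv.coe_piCongrLeft, Equiv.piCongrLeft_apply_eq_cast]

theorem measurePreserving_snoc (n : ℕ) :
    MeasurePreserving (fun p : (Fin n → Z) × Z => (Fin.snoc p.1 p.2 : Fin (n + 1) → Z))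
      ((iid D n).prod D) (iid D (n + 1)) := by
  unfold iid
  convert (measurePreserving_piFinSuccAbove (fun _ : Fin (n + 1) => D) (Fin.last n)).symm.comp
    (Measure.measurePreserving_swap (μ := Measure.pi fun _ : Fin n => D) (ν := D))
  ext p
  simp [MeasurableEquiv.piFinSuccAbove_symm_apply]

end Sampling

section Stability

variable {ℓ : H → Z → ℝ} {A : ∀ k : ℕ, (Fin k → Z) → H} {k : ℕ}

theorem measurable_replaceOneGap
    (hmeas : Measurable fun p : (Fin k → Z) × Z => ℓ (A k p.1) p.2) (i : Fin k) :
    Measurable (replaceOneGap ℓ A k i) := by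
  have hi : Measurable fun p : (Fin k → Z) × Z => p.1 i :=
    (measurable_pi_apply i).comp measurable_fst
  exact ((hmeas.comp (measurable_fst.prodMk hi)).sub
    (hmeas.comp (measurable_update'.prodMk hi))).abs

theorem integrable_replaceOneGap (hℓ : ∀ h z, 0 ≤ ℓ h z) (hmb : MeasBddAlg ℓ A) (i : Fin k)
    (μ : Measure ((Fin k → Z) × Z)) [IsFiniteMeasure μ] :
    Integrable (replaceOneGap ℓ A k i) μ := by
  obtain ⟨hmeas, C, hC⟩ := hmb k
  refine .of_bound (measurable_replaceOneGap hmeas i).aestronglyMeasurable C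
    (.of_forall fun p => ?_)
  rw [Real.norm_eq_abs, replaceOneGap, abs_abs]
  exact abs_loss_sub_le hℓ hC _ _ _

variable (D : Measure Z) [IsProbabilityMeasure D]

theorem integral_replaceOneGap_eq (hsym : IsSymmetricAlg A) (hmb : MeasBddAlg ℓ A)
    (i j : Fin k) :
    ∫ p, replaceOneGap ℓ A k i p ∂(iid D k).prod D
      = ∫ p, replaceOneGap ℓ A k j p ∂(iid D k).prod D := by
  set σ := Equiv.swap j i
  calc ∫ p, replaceOneGap ℓ A k i p ∂(iid D k).prod D
      = ∫ p, replaceOneGap ℓ A k j (p.1 ∘ σ, p.2) ∂(iid D k).prod D := by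
        simp only [replaceOneGap_comp_perm hsym, σ, Equiv.swap_apply_left]
    _ = ∫ p, replaceOneGap ℓ A k j p ∂(iid D k).prod D :=
        ((measurePreserving_comp_perm D σ).prod (.id D)).integral_comp_of_measurable
          (measurable_replaceOneGap (hmb k).1 j)

theorem integral_replaceOneGap_le {ε1 : ℕ → ℝ} (hℓ : ∀ h z, 0 ≤ ℓ h z)
    (hsym : IsSymmetricAlg A) (hmb : MeasBddAlg ℓ A) (hst : OAROS ℓ A ε1) (hk : 1 ≤ k)
    (i : Fin k) :
    ∫ p, replaceOneGap ℓ A k i p ∂(iid D k).prod D ≤ ε1 k := by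
  have hint (j : Fin k) := integrable_replaceOneGap hℓ hmb j ((iid D k).prod D)
  have hk0 : (k : ℝ) ≠ 0 := by exact_mod_cast (by omega : k ≠ 0)
  have hmean : ∫ p, (k : ℝ)⁻¹ * ∑ j, replaceOneGap ℓ A k j p ∂(iid D k).prod D
      = ∫ p, replaceOneGap ℓ A k i p ∂(iid D k).prod D := by
    rw [integral_const_mul, integral_finsetSum _ fun j _ => hint j,
      Finset.sum_congr rfl fun j _ => integral_replaceOneGap_eq D hsym hmb j i, Finset.sum_const,
      Finset.card_univ, Fintype.card_fin, nsmul_eq_mul, inv_mul_cancel_left₀ hk0]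
  rw [← hmean, integral_prod _ ((integrable_finsetSum _ fun j _ => hint j).const_mul _)]
  exact hst.2 D inferInstance k hk

theorem abs_integral_snoc_loss_sub_le (hℓ : ∀ h z, 0 ≤ ℓ h z) (hmb : MeasBddAlg ℓ A) (n : ℕ) :
    |∫ T, ∫ y, ∫ y',
        (ℓ (A (n + 1) (Fin.snoc T y')) y - ℓ (A (n + 1) (Fin.snoc T y)) y)
      ∂D ∂D ∂(iid D n)|
      ≤ ∫ p, replaceOneGap ℓ A (n + 1) (Fin.last n) p ∂(iid D (n + 1)).prod D := by
  obtain ⟨hmeas, C, hC⟩ := hmb (n + 1)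
  set G : ((Fin n → Z) × Z) × Z → ℝ := fun q =>
    ℓ (A (n + 1) (Fin.snoc q.1.1 q.2)) q.1.2 - ℓ (A (n + 1) (Fin.snoc q.1.1 q.1.2)) q.1.2
  have hsnoc := (measurePreserving_snoc D n).measurable
  have hGmeas : Measurable G :=
    (hmeas.comp ((hsnoc.comp (measurable_fst.fst.prodMk measurable_snd)).prodMk
      measurable_fst.snd)).sub (hmeas.comp ((hsnoc.comp measurable_fst).prodMk measurable_fst.snd))
  have hG : Integrable G (((iid D n).prod D).prod D) :=
    .of_bound hGmeas.aestronglyMeasurable C (.of_forall fun q => abs_loss_sub_le hℓ hC _ _ _)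
  have hnested : ∫ T, ∫ y, ∫ y', G ((T, y), y') ∂D ∂D ∂(iid D n)
      = ∫ q, G q ∂((iid D n).prod D).prod D := by
    rw [integral_prod _ hG, integral_prod _ hG.integral_prod_left]
  have hgap : ∫ q, |G q| ∂((iid D n).prod D).prod D
      = ∫ p, replaceOneGap ℓ A (n + 1) (Fin.last n) p ∂(iid D (n + 1)).prod D := by
    simp only [G, ← replaceOneGap_snoc_last]
    exact ((measurePreserving_snoc D n).prod (.id D)).integral_comp_of_measurable
      (measurable_replaceOneGap hmeas _)
  exact hgap ▸ hnested ▸ abs_integral_le_integral_abs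

end Stability

end

theorem stmt_2_general {Z H : Type*} [MeasurableSpace Z] (ℓ : H → Z → ℝ)
    (A : ∀ k : ℕ, (Fin k → Z) → H) (ε1 : ℕ → ℝ)
    (hℓ : ∀ (h : H) (z : Z), 0 ≤ ℓ h z)
    (hsym : IsSymmetricAlg A) (hmb : MeasBddAlg ℓ A)
    (hst : OAROS ℓ A ε1)
    (D : Measure Z) [IsProbabilityMeasure D] (n : ℕ) :
    |∫ T, ∫ y, ∫ y',
        (ℓ (A (n + 1) (Fin.snoc T y')) y - ℓ (A (n + 1) (Fin.snoc T y)) y)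
      ∂D ∂D ∂(iid D n)| ≤ ε1 n :=
  calc _ ≤ ∫ p, replaceOneGap ℓ A (n + 1) (Fin.last n) p ∂(iid D (n + 1)).prod D :=
        abs_integral_snoc_loss_sub_le D hℓ hmb n
    _ ≤ ε1 (n + 1) := integral_replaceOneGap_le D hℓ hsym hmb hst n.succ_pos _
    _ ≤ ε1 n := hst.1 n.le_succ

/-- for an OAROS-stable algorithm,
`| E_T E_y E_y' [ ℓ(A(T⊕y'), y) − ℓ(A(T⊕y), y) ] | ≤ ε1(n)`. -/
theorem stmt_2 {Z H : Type*} [MeasurableSpace Z] (ℓ : H → Z → ℝ)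
    (A : ∀ k : ℕ, (Fin k → Z) → H) (ε1 : ℕ → ℝ)
    (hℓ : ∀ (h : H) (z : Z), 0 ≤ ℓ h z)
    (hsym : IsSymmetricAlg A) (hmb : MeasBddAlg ℓ A)
    (hst : OAROS ℓ A ε1)
    (D : Measure Z) [IsProbabilityMeasure D] (n : ℕ) (hn : 1 ≤ n) :
    |∫ T, ∫ y, ∫ y',
        (ℓ (A (n + 1) (Fin.snoc T y')) y - ℓ (A (n + 1) (Fin.snoc T y)) y)
      ∂D ∂D ∂(iid D n)| ≤ ε1 n :=
  stmt_2_general ℓ A ε1 hℓ hsym hmb hst D n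
end
end

section
/- Suppose the learning algorithm A is OAROS with rate ε1, and suppose there is a function ε̃ : ℕ → ℝ such that for every n ≥ 1, E_{T~D^n} E_{x'~D} [ (1/n) Σ_{i=1}^n ℓ(A_n(T^{i←x'}), T_i) − L_D(A_{n+1}(T ⊕ x')) ] ≤ ε̃(n). Then for all n, m ≥ 1, E_{T~D^n} E_{V~D^m} [ (1/m²) Σ_{i=1}^m Σ_{j=1}^m ( ℓ(A_n(T), V_j) − ℓ(A_{n+1}(T ⊕ V_i), V_j) ) ] ≤ (1 + 1/m)·ε1(n) + ε̃(n). -/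
open MeasureTheory

noncomputable section

section Helpers

variable {Z : Type*} [MeasurableSpace Z]

instance iid.instIsProbabilityMeasure (D : Measure Z) [IsProbabilityMeasure D] (n : ℕ) :
    IsProbabilityMeasure (iid D n) := by
  unfold iid; infer_instance

/-- snoc as a measurable equiv. -/
def msnocEquiv (n : ℕ) : ((Fin n → Z) × Z) ≃ᵐ (Fin (n + 1) → Z) :=
  MeasurableEquiv.prodComm.trans
    ((MeasurableEquiv.piFinSuccAbove (fun _ : Fin (n + 1) => Z) (Fin.last n)).symm)

lemma msnocEquiv_apply {n : ℕ} (p : (Fin n → Z) × Z) :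
    msnocEquiv (Z := Z) n p = Fin.snoc p.1 p.2 := by
  show (Fin.insertNthEquiv (fun _ => Z) (Fin.last n)) (p.2, p.1) = Fin.snoc p.1 p.2
  rw [Fin.insertNthEquiv_last]
  rfl

lemma measurable_snocfun (n : ℕ) :
    Measurable (fun p : (Fin n → Z) × Z => (Fin.snoc p.1 p.2 : Fin (n + 1) → Z)) := by
  have hcoe : ⇑(msnocEquiv (Z := Z) n) = fun p : (Fin n → Z) × Z => Fin.snoc p.1 p.2 :=
    funext fun p => msnocEquiv_apply p
  exact hcoe ▸ (msnocEquiv (Z := Z) n).measurable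

variable (D : Measure Z) [IsProbabilityMeasure D]

lemma mp_comp_perm (k : ℕ) (e : Equiv.Perm (Fin k)) :
    MeasurePreserving (fun S : Fin k → Z => S ∘ e) (iid D k) (iid D k) := by
  have hmeas : Measurable (fun S : Fin k → Z => S ∘ e) :=
    measurable_pi_lambda _ fun j => measurable_pi_apply (e j)
  refine ⟨hmeas, ?_⟩
  show _ = Measure.pi fun _ => D
  refine (Measure.pi_eq (μ := fun _ => D) fun s hs => ?_).symm
  rw [Measure.map_apply hmeas (MeasurableSet.univ_pi hs)]
  have hpre : (fun S : Fin k → Z => S ∘ e) ⁻¹' Set.pi Set.univ s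
      = Set.pi Set.univ fun j => s (e.symm j) := by
    ext S
    simp only [Set.mem_preimage, Set.mem_pi, Set.mem_univ, true_implies, Function.comp]
    constructor
    · intro h j; simpa using h (e.symm j)
    · intro h i; simpa using h (e i)
  rw [hpre]
  rw [show (iid D k) = Measure.pi fun _ => D from rfl, Measure.pi_pi]
  exact Equiv.prod_comp e.symm fun i => D (s i)

lemma mp_snoc (n : ℕ) :
    MeasurePreserving (⇑(msnocEquiv (Z := Z) n)) ((iid D n).prod D) (iid D (n + 1)) := by
  refine ⟨(msnocEquiv (Z := Z) n).measurable, ?_⟩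
  show _ = Measure.pi fun _ => D
  refine (Measure.pi_eq (μ := fun _ => D) fun s hs => ?_).symm
  rw [Measure.map_apply (msnocEquiv (Z := Z) n).measurable (MeasurableSet.univ_pi hs)]
  have hpre : (⇑(msnocEquiv (Z := Z) n)) ⁻¹' Set.pi Set.univ s
      = (Set.pi Set.univ fun j : Fin n => s j.castSucc) ×ˢ s (Fin.last n) := by
    ext p
    simp only [Set.mem_preimage, msnocEquiv_apply, Set.mem_pi, Set.mem_univ, true_implies,
      Set.mem_prod]
    constructor
    · intro h
      refine ⟨fun j => ?_, ?_⟩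
      · simpa [Fin.snoc_castSucc] using h j.castSucc
      · simpa [Fin.snoc_last] using h (Fin.last n)
    · rintro ⟨h1, h2⟩ j
      induction j using Fin.lastCases with
      | last => simpa [Fin.snoc_last]
      | cast j => simpa [Fin.snoc_castSucc] using h1 j
  rw [hpre, Measure.prod_prod,
    show (iid D n) = Measure.pi fun _ => D from rfl, Measure.pi_pi,
    Fin.prod_univ_castSucc fun j : Fin (n + 1) => D (s j)]

lemma map_eval (k : ℕ) (j : Fin k) :
    Measure.map (fun V : Fin k → Z => V j) (iid D k) = D := by
  classical
  ext s hs
  rw [Measure.map_apply (measurable_pi_apply j) hs]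
  have hpre : (fun V : Fin k → Z => V j) ⁻¹' s
      = Set.pi Set.univ (Function.update (fun _ : Fin k => Set.univ) j s) := by
    rw [← Set.eval_preimage]
  rw [hpre, show (iid D k) = Measure.pi fun _ => D from rfl, Measure.pi_pi]
  have : ∀ i : Fin k, D (Function.update (fun _ : Fin k => Set.univ) j s i)
      = Function.update (fun _ : Fin k => (1 : ENNReal)) j (D s) i := by
    intro i
    by_cases h : i = j
    · subst h; simp
    · simp [Function.update_of_ne h]
  rw [Finset.prod_congr rfl fun i _ => this i, Finset.prod_update_of_mem (Finset.mem_univ j)]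
  simp

lemma map_eval_pair2 (k : ℕ) {i j : Fin k} (hij : i ≠ j) :
    Measure.map (fun V : Fin k → Z => (V i, V j)) (iid D k) = D.prod D := by
  classical
  have hmeas : Measurable (fun V : Fin k → Z => (V i, V j)) :=
    (measurable_pi_apply i).prodMk (measurable_pi_apply j)
  refine (Measure.prod_eq (μ := D) (ν := D) fun s t hs ht => ?_).symm
  rw [Measure.map_apply hmeas (hs.prod ht)]
  have hpre : (fun V : Fin k → Z => (V i, V j)) ⁻¹' (s ×ˢ t)
      = Set.pi Set.univ
          (Function.update (Function.update (fun _ : Fin k => Set.univ) i s) j t) := by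
    ext V
    simp only [Set.mem_preimage, Set.mem_prod, Set.mem_pi, Set.mem_univ, true_implies]
    constructor
    · intro ⟨h1, h2⟩ l
      by_cases hl : l = j
      · subst hl; simp [Function.update_self, h2]
      · by_cases hl' : l = i
        · subst hl'; simp [Function.update_of_ne hl, Function.update_self, h1]
        · simp [Function.update_of_ne hl, Function.update_of_ne hl']
    · intro h
      refine ⟨?_, ?_⟩
      · have := h i; simpa [Function.update_of_ne hij, Function.update_self] using this
      · have := h j; simpa [Function.update_self] using this
  rw [hpre, show (iid D k) = Measure.pi fun _ => D from rfl, Measure.pi_pi]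
  have : ∀ l : Fin k,
      D (Function.update (Function.update (fun _ : Fin k => Set.univ) i s) j t l)
      = Function.update (Function.update (fun _ : Fin k => (1 : ENNReal)) i (D s)) j (D t) l := by
    intro l
    by_cases h : l = j
    · subst h; simp
    · by_cases h' : l = i
      · subst h'; simp [Function.update_of_ne h]
      · simp [Function.update_of_ne h, Function.update_of_ne h']
  rw [Finset.prod_congr rfl fun l _ => this l, Finset.prod_update_of_mem (Finset.mem_univ j)]
  rw [Finset.prod_update_of_mem (show i ∈ Finset.univ \ {j} by simp [hij])]
  simp [mul_comm]

lemma mp_exchange (n : ℕ) (i : Fin n) :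
    MeasurePreserving (fun p : (Fin n → Z) × Z => (Function.update p.1 i p.2, p.1 i))
      ((iid D n).prod D) ((iid D n).prod D) := by
  classical
  have key : (fun p : (Fin n → Z) × Z => (Function.update p.1 i p.2, p.1 i))
      = (msnocEquiv (Z := Z) n).symm ∘
        (fun S : Fin (n+1) → Z => S ∘ (Equiv.swap i.castSucc (Fin.last n))) ∘
        ⇑(msnocEquiv (Z := Z) n) := by
    funext p
    have h1 : (msnocEquiv (Z := Z) n p) ∘ (Equiv.swap i.castSucc (Fin.last n))
        = msnocEquiv (Z := Z) n (Function.update p.1 i p.2, p.1 i) := by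
      funext j
      rw [msnocEquiv_apply, msnocEquiv_apply]
      induction j using Fin.lastCases with
      | last =>
          simp only [Function.comp_apply, Equiv.swap_apply_right, Fin.snoc_last,
            Fin.snoc_castSucc]
      | cast j =>
          by_cases hj : j = i
          · subst hj
            simp only [Function.comp_apply, Equiv.swap_apply_left, Fin.snoc_last,
              Fin.snoc_castSucc, Function.update_self]
          · have h2 : (Equiv.swap i.castSucc (Fin.last n)) j.castSucc = j.castSucc :=
              Equiv.swap_apply_of_ne_of_ne
                (fun h => hj (Fin.castSucc_injective n h)) (Fin.castSucc_lt_last j).ne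
            simp only [Function.comp_apply, h2, Fin.snoc_castSucc,
              Function.update_of_ne hj]
    simp only [Function.comp_apply, h1, MeasurableEquiv.symm_apply_apply]
  rw [key]
  exact ((mp_snoc D n).symm (msnocEquiv (Z := Z) n)).comp
    ((mp_comp_perm D (n+1) (Equiv.swap i.castSucc (Fin.last n))).comp (mp_snoc D n))

lemma integrable_bdd2 {α : Type*} [MeasurableSpace α] {μ : Measure α} [IsFiniteMeasure μ]
    {f : α → ℝ} {C : ℝ} (hf : Measurable f) (hb : ∀ a, |f a| ≤ C) :
    Integrable f μ :=
  ⟨hf.aestronglyMeasurable, HasFiniteIntegral.of_bounded (C := C)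
    (Filter.Eventually.of_forall fun a => by rw [Real.norm_eq_abs]; exact hb a)⟩

lemma abs_integral_bdd {α : Type*} [MeasurableSpace α] (μ : Measure α) [IsProbabilityMeasure μ]
    {f : α → ℝ} {C : ℝ} (hf : Measurable f) (hb : ∀ a, |f a| ≤ C) :
    |∫ a, f a ∂μ| ≤ C := by
  calc |∫ a, f a ∂μ| ≤ ∫ a, |f a| ∂μ := by
        simpa [Real.norm_eq_abs] using norm_integral_le_integral_norm (μ := μ) f
    _ ≤ ∫ _, C ∂μ := by
        refine integral_mono ?_ (integrable_const C) hb
        exact integrable_bdd2 hf.abs fun a => by rw [abs_abs]; exact hb a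
    _ = C := by simp

lemma iter_eq_prod2 {α β : Type*} [MeasurableSpace α] [MeasurableSpace β]
    (μ : Measure α) (ν : Measure β) [IsProbabilityMeasure μ] [IsProbabilityMeasure ν]
    {F : α × β → ℝ} {C : ℝ} (hm : Measurable F) (hb : ∀ p, |F p| ≤ C) :
    ∫ a, ∫ b, F (a, b) ∂ν ∂μ = ∫ p, F p ∂(μ.prod ν) :=
  (integral_prod F (integrable_bdd2 hm hb)).symm

lemma iter_integral_sum {α β : Type*} [MeasurableSpace α] [MeasurableSpace β]
    (μ : Measure α) (ν : Measure β) [IsProbabilityMeasure μ] [IsProbabilityMeasure ν]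
    {ι : Type*} (s : Finset ι) {f : ι → α × β → ℝ} {C : ι → ℝ}
    (hm : ∀ i, Measurable (f i)) (hb : ∀ i p, |f i p| ≤ C i) :
    ∫ a, ∫ b, (∑ i ∈ s, f i (a, b)) ∂ν ∂μ = ∑ i ∈ s, ∫ a, ∫ b, f i (a, b) ∂ν ∂μ := by
  rw [iter_eq_prod2 μ ν (F := fun p => ∑ i ∈ s, f i p)
      (by exact Finset.measurable_sum s fun i _ => hm i)
      (C := ∑ i ∈ s, C i)
      (fun p => (Finset.abs_sum_le_sum_abs _ _).trans (Finset.sum_le_sum fun i _ => hb i p)),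
    integral_finset_sum s fun i _ => integrable_bdd2 (hm i) (hb i)]
  exact Finset.sum_congr rfl fun i _ => (iter_eq_prod2 μ ν (hm i) (hb i)).symm

lemma iter_integral_sub {α β : Type*} [MeasurableSpace α] [MeasurableSpace β]
    (μ : Measure α) (ν : Measure β) [IsProbabilityMeasure μ] [IsProbabilityMeasure ν]
    {f g : α × β → ℝ} {Cf Cg : ℝ} (hfm : Measurable f) (hfb : ∀ p, |f p| ≤ Cf)
    (hgm : Measurable g) (hgb : ∀ p, |g p| ≤ Cg) :
    ∫ a, ∫ b, (f (a, b) - g (a, b)) ∂ν ∂μ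
      = (∫ a, ∫ b, f (a, b) ∂ν ∂μ) - ∫ a, ∫ b, g (a, b) ∂ν ∂μ := by
  rw [iter_eq_prod2 μ ν (F := fun p => f p - g p) (hfm.sub hgm)
      (C := Cf + Cg) (fun p => (abs_sub _ _).trans (add_le_add (hfb p) (hgb p))),
    iter_eq_prod2 μ ν hfm hfb, iter_eq_prod2 μ ν hgm hgb,
    integral_sub (integrable_bdd2 hfm hfb) (integrable_bdd2 hgm hgb)]

lemma iter_integral_mono {α β : Type*} [MeasurableSpace α] [MeasurableSpace β]
    (μ : Measure α) (ν : Measure β) [IsProbabilityMeasure μ] [IsProbabilityMeasure ν]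
    {f g : α × β → ℝ} {Cf Cg : ℝ} (hfm : Measurable f) (hfb : ∀ p, |f p| ≤ Cf)
    (hgm : Measurable g) (hgb : ∀ p, |g p| ≤ Cg) (hle : ∀ p, f p ≤ g p) :
    ∫ a, ∫ b, f (a, b) ∂ν ∂μ ≤ ∫ a, ∫ b, g (a, b) ∂ν ∂μ := by
  rw [iter_eq_prod2 μ ν hfm hfb, iter_eq_prod2 μ ν hgm hgb]
  exact integral_mono (integrable_bdd2 hfm hfb) (integrable_bdd2 hgm hgb) hle

lemma integral_perm (k : ℕ) (e : Equiv.Perm (Fin k)) {G : (Fin k → Z) → ℝ}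
    (hG : Measurable G) :
    ∫ S, G (S ∘ e) ∂(iid D k) = ∫ S, G S ∂(iid D k) := by
  conv_rhs => rw [← (mp_comp_perm D k e).map_eq]
  exact (integral_map (mp_comp_perm D k e).measurable.aemeasurable
    (hG.aestronglyMeasurable.mono_measure (le_of_eq (mp_comp_perm D k e).map_eq))).symm

lemma integral_snoc (n : ℕ) {G : (Fin (n + 1) → Z) → ℝ} {C : ℝ}
    (hG : Measurable G) (hb : ∀ S, |G S| ≤ C) :
    ∫ T, ∫ x, G (Fin.snoc T x) ∂D ∂(iid D n) = ∫ S, G S ∂(iid D (n + 1)) := by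
  have hcoe : ⇑(msnocEquiv (Z := Z) n) = fun p : (Fin n → Z) × Z => Fin.snoc p.1 p.2 :=
    funext fun p => msnocEquiv_apply p
  rw [iter_eq_prod2 (iid D n) D (F := fun p : (Fin n → Z) × Z => G (Fin.snoc p.1 p.2))
    (hG.comp (measurable_snocfun n)) (fun p => hb _)]
  conv_rhs => rw [← (mp_snoc D n).map_eq]
  rw [integral_map (mp_snoc D n).measurable.aemeasurable
    (hG.aestronglyMeasurable.mono_measure (le_of_eq (mp_snoc D n).map_eq))]
  simp only [hcoe]

lemma integral_exchange (n : ℕ) (i : Fin n) {F : (Fin n → Z) × Z → ℝ} {C : ℝ}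
    (hm : Measurable F) (hb : ∀ p, |F p| ≤ C) :
    ∫ T, ∫ x, F (Function.update T i x, T i) ∂D ∂(iid D n)
      = ∫ T, ∫ x, F (T, x) ∂D ∂(iid D n) := by
  have hφ := mp_exchange D n i
  rw [iter_eq_prod2 (iid D n) D (F := fun p : (Fin n → Z) × Z =>
      F (Function.update p.1 i p.2, p.1 i)) (hm.comp hφ.measurable) (fun p => hb _),
    iter_eq_prod2 (iid D n) D hm hb]
  conv_rhs => rw [← hφ.map_eq]
  rw [integral_map hφ.measurable.aemeasurable
    (hm.aestronglyMeasurable.mono_measure (le_of_eq hφ.map_eq))]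

lemma integral_eval (k : ℕ) (j : Fin k) {f : Z → ℝ} (hf : Measurable f) :
    ∫ V, f (V j) ∂(iid D k) = ∫ x, f x ∂D := by
  conv_rhs => rw [← map_eval D k j]
  rw [integral_map (measurable_pi_apply j).aemeasurable
    (hf.aestronglyMeasurable.mono_measure (le_of_eq (map_eval D k j)))]

lemma integral_pair2 (k : ℕ) {i j : Fin k} (hij : i ≠ j) {F : Z × Z → ℝ} {C : ℝ}
    (hm : Measurable F) (hb : ∀ p, |F p| ≤ C) :
    ∫ V, F (V i, V j) ∂(iid D k) = ∫ x, ∫ y, F (x, y) ∂D ∂D := by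
  rw [iter_eq_prod2 D D hm hb]
  conv_rhs => rw [← map_eval_pair2 D k hij]
  rw [integral_map ((measurable_pi_apply i).prodMk (measurable_pi_apply j)).aemeasurable
    (hm.aestronglyMeasurable.mono_measure (le_of_eq (map_eval_pair2 D k hij)))]

lemma sum_alg (m : ℕ) (hm : (m : ℝ) ≠ 0) (r q p : ℝ) :
    ((m : ℝ) ^ 2)⁻¹ * (∑ _i : Fin m, ∑ j : Fin m, (r - if j = _i then p else q))
      = r - q + (m : ℝ)⁻¹ * (q - p) := by
  have h1 : ∀ i : Fin m, (∑ j : Fin m, (r - if j = i then p else q))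
      = (m : ℝ) * r - ((p - q) + (m : ℝ) * q) := by
    intro i
    rw [Finset.sum_sub_distrib]
    congr 1
    · rw [Finset.sum_const, Finset.card_univ, Fintype.card_fin, nsmul_eq_mul]
    · have h2 : ∀ j : Fin m, (if j = i then p else q)
          = (if j = i then p - q else 0) + q := by
        intro j; by_cases h : j = i <;> simp [h]
      simp_rw [h2]
      rw [Finset.sum_add_distrib, Fintype.sum_ite_eq' i (fun _ => p - q),
        Finset.sum_const, Finset.card_univ, Fintype.card_fin, nsmul_eq_mul]
  simp_rw [h1]
  rw [Finset.sum_const, Finset.card_univ, Fintype.card_fin, nsmul_eq_mul]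
  field_simp
  ring

end Helpers

/-- OAROS stability together with the auxiliary bound `ε̃` yields
validation stability with rate `(1 + 1/m)·ε1(n) + ε̃(n)`. -/
theorem stmt_3 {Z H : Type*} [MeasurableSpace Z] (ℓ : H → Z → ℝ)
    (A : ∀ k : ℕ, (Fin k → Z) → H) (ε1 εt : ℕ → ℝ)
    (hℓ : ∀ (h : H) (z : Z), 0 ≤ ℓ h z)
    (hsym : IsSymmetricAlg A) (hmb : MeasBddAlg ℓ A)
    (hst : OAROS ℓ A ε1)
    (D : Measure Z) [IsProbabilityMeasure D]
    (haux : ∀ n : ℕ, 1 ≤ n →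
      ∫ T, ∫ x',
          ((n : ℝ)⁻¹ * ∑ i : Fin n, ℓ (A n (Function.update T i x')) (T i) -
            ∫ y, ℓ (A (n + 1) (Fin.snoc T x')) y ∂D)
        ∂D ∂(iid D n) ≤ εt n) :
    ∀ n m : ℕ, 1 ≤ n → 1 ≤ m →
      ∫ T, ∫ V,
          ((m : ℝ) ^ 2)⁻¹ * ∑ i : Fin m, ∑ j : Fin m,
            (ℓ (A n T) (V j) - ℓ (A (n + 1) (Fin.snoc T (V i))) (V j))
        ∂(iid D m) ∂(iid D n)
      ≤ (1 + (m : ℝ)⁻¹) * ε1 n + εt n := by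
  classical
  intro n m hn hm
  have hm0 : (m : ℝ) ≠ 0 := Nat.cast_ne_zero.mpr (by omega)
  have hn0 : (n : ℝ) ≠ 0 := Nat.cast_ne_zero.mpr (by omega)
  have hFn := (hmb n).1
  have hF1 := (hmb (n + 1)).1
  obtain ⟨Cn', hCn'⟩ := (hmb n).2
  obtain ⟨C1', hC1'⟩ := (hmb (n + 1)).2
  set Cn : ℝ := max Cn' 0 with hCndef
  set C1 : ℝ := max C1' 0 with hC1def
  have hbn : ∀ p : (Fin n → Z) × Z, |ℓ (A n p.1) p.2| ≤ Cn := fun p => by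
    rw [abs_of_nonneg (hℓ _ _)]; exact (hCn' p.1 p.2).trans (le_max_left _ _)
  have hb1 : ∀ p : (Fin (n + 1) → Z) × Z, |ℓ (A (n + 1) p.1) p.2| ≤ C1 := fun p => by
    rw [abs_of_nonneg (hℓ _ _)]; exact (hC1' p.1 p.2).trans (le_max_left _ _)
  have hsnocT : ∀ T : Fin n → Z, Measurable (fun x : Z => (Fin.snoc T x : Fin (n + 1) → Z)) :=
    fun T => (measurable_snocfun n).comp measurable_prodMk_left
  -- ε1 n is nonnegative
  have hε1nn : 0 ≤ ε1 n := by
    refine le_trans ?_ (hst.2 D inferInstance n hn)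
    refine integral_nonneg fun T => integral_nonneg fun x => ?_
    refine mul_nonneg (by positivity) (Finset.sum_nonneg fun i _ => abs_nonneg _)
  -- the three basic quantities
  -- R = ∫ T, ∫ x, ℓ (A n T) x ∂D ∂(iid D n)
  -- Q = ∫ T, ∫ x, ∫ y, ℓ (A (n+1) (Fin.snoc T x)) y ∂D ∂D ∂(iid D n)
  -- P = ∫ T, ∫ x, ℓ (A (n+1) (Fin.snoc T x)) x ∂D ∂(iid D n)
  -- measurability of the integrated quantities
  have measR1 : Measurable (fun T : Fin n → Z => ∫ x, ℓ (A n T) x ∂D) :=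
    hFn.stronglyMeasurable.integral_prod_right'.measurable
  have hbR1 : ∀ T : Fin n → Z, |∫ x, ℓ (A n T) x ∂D| ≤ Cn := fun T =>
    abs_integral_bdd D (hFn.comp measurable_prodMk_left) fun x => hbn (T, x)
  have measG1 : Measurable (fun p : (Fin n → Z) × Z =>
      ∫ y, ℓ (A (n + 1) (Fin.snoc p.1 p.2)) y ∂D) :=
    ((hF1.comp (((measurable_snocfun n).comp measurable_fst).prodMk
      measurable_snd)).stronglyMeasurable.integral_prod_right').measurable
  have hbG1 : ∀ p : (Fin n → Z) × Z, |∫ y, ℓ (A (n + 1) (Fin.snoc p.1 p.2)) y ∂D| ≤ C1 :=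
    fun p => abs_integral_bdd D (hF1.comp measurable_prodMk_left)
      fun y => hb1 (Fin.snoc p.1 p.2, y)
  have measQ1 : Measurable (fun T : Fin n → Z =>
      ∫ x, ∫ y, ℓ (A (n + 1) (Fin.snoc T x)) y ∂D ∂D) :=
    (measG1.stronglyMeasurable.integral_prod_right').measurable
  have hbQ1 : ∀ T : Fin n → Z, |∫ x, ∫ y, ℓ (A (n + 1) (Fin.snoc T x)) y ∂D ∂D| ≤ C1 :=
    fun T => abs_integral_bdd D (measG1.comp measurable_prodMk_left)
      fun x => hbG1 (T, x)
  have measP1 : Measurable (fun T : Fin n → Z => ∫ x, ℓ (A (n + 1) (Fin.snoc T x)) x ∂D) :=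
    ((hF1.comp ((measurable_snocfun n).prodMk
      measurable_snd)).stronglyMeasurable.integral_prod_right').measurable
  have hbP1 : ∀ T : Fin n → Z, |∫ x, ℓ (A (n + 1) (Fin.snoc T x)) x ∂D| ≤ C1 := fun T =>
    abs_integral_bdd D (hF1.comp ((hsnocT T).prodMk measurable_id))
      fun x => hb1 (Fin.snoc T x, x)
  -- the inner integral over V
  have hinner : ∀ T : Fin n → Z,
      (∫ V, ((m : ℝ) ^ 2)⁻¹ * ∑ i : Fin m, ∑ j : Fin m,
        (ℓ (A n T) (V j) - ℓ (A (n + 1) (Fin.snoc T (V i))) (V j)) ∂(iid D m))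
      = (∫ x, ℓ (A n T) x ∂D) - (∫ x, ∫ y, ℓ (A (n + 1) (Fin.snoc T x)) y ∂D ∂D)
        + (m : ℝ)⁻¹ * ((∫ x, ∫ y, ℓ (A (n + 1) (Fin.snoc T x)) y ∂D ∂D)
          - ∫ x, ℓ (A (n + 1) (Fin.snoc T x)) x ∂D) := by
    intro T
    have meas1 : ∀ j : Fin m, Measurable (fun V : Fin m → Z => ℓ (A n T) (V j)) :=
      fun j => hFn.comp (measurable_const.prodMk (measurable_pi_apply j))
    have meas2 : ∀ i j : Fin m,
        Measurable (fun V : Fin m → Z => ℓ (A (n + 1) (Fin.snoc T (V i))) (V j)) :=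
      fun i j => hF1.comp (((hsnocT T).comp
        (measurable_pi_apply i)).prodMk (measurable_pi_apply j))
    have hint1 : ∀ j : Fin m, Integrable (fun V : Fin m → Z => ℓ (A n T) (V j)) (iid D m) :=
      fun j => integrable_bdd2 (meas1 j) fun V => hbn (T, V j)
    have hint2 : ∀ i j : Fin m,
        Integrable (fun V : Fin m → Z => ℓ (A (n + 1) (Fin.snoc T (V i))) (V j)) (iid D m) :=
      fun i j => integrable_bdd2 (meas2 i j) fun V => hb1 (Fin.snoc T (V i), V j)
    have hint3 : ∀ i j : Fin m, Integrable (fun V : Fin m → Z =>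
        ℓ (A n T) (V j) - ℓ (A (n + 1) (Fin.snoc T (V i))) (V j)) (iid D m) :=
      fun i j => integrable_bdd2 ((meas1 j).sub (meas2 i j))
        fun V => (abs_sub _ _).trans
          (add_le_add (hbn (T, V j)) (hb1 (Fin.snoc T (V i), V j)))
    rw [integral_const_mul,
      integral_finset_sum _ fun i _ =>
        integrable_finset_sum _ fun j _ => hint3 i j]
    have hIJ : ∀ i : Fin m,
        (∫ V, ∑ j : Fin m,
          (ℓ (A n T) (V j) - ℓ (A (n + 1) (Fin.snoc T (V i))) (V j)) ∂(iid D m))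
        = ∑ j : Fin m, ((∫ x, ℓ (A n T) x ∂D) -
            if j = i then (∫ x, ℓ (A (n + 1) (Fin.snoc T x)) x ∂D)
            else (∫ x, ∫ y, ℓ (A (n + 1) (Fin.snoc T x)) y ∂D ∂D)) := by
      intro i
      rw [integral_finset_sum _ fun j _ => hint3 i j]
      refine Finset.sum_congr rfl fun j _ => ?_
      rw [integral_sub (hint1 j) (hint2 i j)]
      congr 1
      · exact integral_eval D m j (f := fun x => ℓ (A n T) x)
          (hFn.comp measurable_prodMk_left)
      · by_cases h : j = i
        · subst h
          rw [if_pos rfl]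
          exact integral_eval D m j (f := fun x => ℓ (A (n + 1) (Fin.snoc T x)) x)
            (hF1.comp ((hsnocT T).prodMk measurable_id))
        · rw [if_neg h]
          exact integral_pair2 D m (show i ≠ j from fun e => h e.symm)
            (F := fun q : Z × Z => ℓ (A (n + 1) (Fin.snoc T q.1)) q.2)
            (hF1.comp (((hsnocT T).comp measurable_fst).prodMk measurable_snd))
            (fun q => hb1 (Fin.snoc T q.1, q.2))
    rw [Finset.sum_congr rfl fun i _ => hIJ i]
    exact sum_alg m hm0 _ _ _
  -- the key identity
  have key : (∫ T, ∫ V,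
          ((m : ℝ) ^ 2)⁻¹ * ∑ i : Fin m, ∑ j : Fin m,
            (ℓ (A n T) (V j) - ℓ (A (n + 1) (Fin.snoc T (V i))) (V j))
        ∂(iid D m) ∂(iid D n))
      = ((∫ T, ∫ x, ℓ (A n T) x ∂D ∂(iid D n))
          - (∫ T, ∫ x, ∫ y, ℓ (A (n + 1) (Fin.snoc T x)) y ∂D ∂D ∂(iid D n)))
        + (m : ℝ)⁻¹ * ((∫ T, ∫ x, ∫ y, ℓ (A (n + 1) (Fin.snoc T x)) y ∂D ∂D ∂(iid D n))
          - (∫ T, ∫ x, ℓ (A (n + 1) (Fin.snoc T x)) x ∂D ∂(iid D n))) := by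
    rw [integral_congr_ae (Filter.Eventually.of_forall hinner)]
    have intRQ : Integrable (fun T : Fin n → Z =>
        (∫ x, ℓ (A n T) x ∂D) - ∫ x, ∫ y, ℓ (A (n + 1) (Fin.snoc T x)) y ∂D ∂D) (iid D n) :=
      integrable_bdd2 (measR1.sub measQ1)
        fun T => (abs_sub _ _).trans (add_le_add (hbR1 T) (hbQ1 T))
    have intQP : Integrable (fun T : Fin n → Z =>
        (∫ x, ∫ y, ℓ (A (n + 1) (Fin.snoc T x)) y ∂D ∂D)
          - ∫ x, ℓ (A (n + 1) (Fin.snoc T x)) x ∂D) (iid D n) :=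
      integrable_bdd2 (measQ1.sub measP1)
        fun T => (abs_sub _ _).trans (add_le_add (hbQ1 T) (hbP1 T))
    rw [integral_add intRQ (intQP.const_mul _),
      integral_sub (integrable_bdd2 measR1 hbR1) (integrable_bdd2 measQ1 hbQ1),
      integral_const_mul,
      integral_sub (integrable_bdd2 measQ1 hbQ1) (integrable_bdd2 measP1 hbP1)]
  -- Inequality I : R - Q ≤ εt n
  have hI : (∫ T, ∫ x, ℓ (A n T) x ∂D ∂(iid D n))
      - (∫ T, ∫ x, ∫ y, ℓ (A (n + 1) (Fin.snoc T x)) y ∂D ∂D ∂(iid D n)) ≤ εt n := by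
    have ha := haux n hn
    have humeas : Measurable (fun p : (Fin n → Z) × Z =>
        (n : ℝ)⁻¹ * ∑ i : Fin n, ℓ (A n (Function.update p.1 i p.2)) (p.1 i)) := by
      refine Measurable.const_mul ?_ _
      exact Finset.measurable_sum _ fun i _ => hFn.comp (mp_exchange D n i).measurable
    have hub : ∀ p : (Fin n → Z) × Z,
        |(n : ℝ)⁻¹ * ∑ i : Fin n, ℓ (A n (Function.update p.1 i p.2)) (p.1 i)|
          ≤ (n : ℝ)⁻¹ * ((n : ℝ) * Cn) := by
      intro p
      rw [abs_mul, abs_of_nonneg (by positivity : (0:ℝ) ≤ (n : ℝ)⁻¹)]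
      refine mul_le_mul_of_nonneg_left ?_ (by positivity)
      calc |∑ i : Fin n, ℓ (A n (Function.update p.1 i p.2)) (p.1 i)|
          ≤ ∑ i : Fin n, |ℓ (A n (Function.update p.1 i p.2)) (p.1 i)| :=
            Finset.abs_sum_le_sum_abs _ _
        _ ≤ ∑ _i : Fin n, Cn := Finset.sum_le_sum fun i _ =>
            hbn (Function.update p.1 i p.2, p.1 i)
        _ = (n : ℝ) * Cn := by
            rw [Finset.sum_const, Finset.card_univ, Fintype.card_fin, nsmul_eq_mul]
    have h1 := iter_integral_sub (iid D n) D
      (f := fun p : (Fin n → Z) × Z =>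
        (n : ℝ)⁻¹ * ∑ i : Fin n, ℓ (A n (Function.update p.1 i p.2)) (p.1 i))
      (g := fun p : (Fin n → Z) × Z => ∫ y, ℓ (A (n + 1) (Fin.snoc p.1 p.2)) y ∂D)
      humeas hub measG1 hbG1
    have h2 : (∫ T, ∫ x, (n : ℝ)⁻¹ *
        ∑ i : Fin n, ℓ (A n (Function.update T i x)) (T i) ∂D ∂(iid D n))
        = ∫ T, ∫ x, ℓ (A n T) x ∂D ∂(iid D n) := by
      simp_rw [integral_const_mul]
      rw [iter_integral_sum (iid D n) D Finset.univ
        (f := fun (i : Fin n) (p : (Fin n → Z) × Z) =>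
          ℓ (A n (Function.update p.1 i p.2)) (p.1 i))
        (C := fun _ => Cn)
        (fun i => hFn.comp (mp_exchange D n i).measurable)
        (fun i p => hbn (Function.update p.1 i p.2, p.1 i))]
      rw [Finset.sum_congr rfl fun i _ => integral_exchange D n i hFn hbn]
      rw [Finset.sum_const, Finset.card_univ, Fintype.card_fin, nsmul_eq_mul,
        ← mul_assoc, inv_mul_cancel₀ hn0, one_mul]
    rw [h1, h2] at ha
    exact ha
  -- Inequality II : Q - P ≤ ε1 n
  have hII : (∫ T, ∫ x, ∫ y, ℓ (A (n + 1) (Fin.snoc T x)) y ∂D ∂D ∂(iid D n))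
      - (∫ T, ∫ x, ℓ (A (n + 1) (Fin.snoc T x)) x ∂D ∂(iid D n)) ≤ ε1 n := by
    have measLS : Measurable (fun S : Fin (n + 1) → Z => ∫ y, ℓ (A (n + 1) S) y ∂D) :=
      hF1.stronglyMeasurable.integral_prod_right'.measurable
    have hbLS : ∀ S : Fin (n + 1) → Z, |∫ y, ℓ (A (n + 1) S) y ∂D| ≤ C1 := fun S =>
      abs_integral_bdd D (hF1.comp measurable_prodMk_left) fun y => hb1 (S, y)
    have measGlast : Measurable (fun S : Fin (n + 1) → Z => ℓ (A (n + 1) S) (S (Fin.last n))) :=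
      hF1.comp (measurable_id.prodMk (measurable_pi_apply (Fin.last n)))
    have hbGlast : ∀ S : Fin (n + 1) → Z, |ℓ (A (n + 1) S) (S (Fin.last n))| ≤ C1 :=
      fun S => hb1 (S, S (Fin.last n))
    -- Q over the (n+1)-sample
    have hQiid : (∫ T, ∫ x, ∫ y, ℓ (A (n + 1) (Fin.snoc T x)) y ∂D ∂D ∂(iid D n))
        = ∫ S, ∫ y, ℓ (A (n + 1) S) y ∂D ∂(iid D (n + 1)) :=
      integral_snoc D n (G := fun S => ∫ y, ℓ (A (n + 1) S) y ∂D) measLS hbLS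
    -- P over the (n+1)-sample
    have hPiid : (∫ T, ∫ x, ℓ (A (n + 1) (Fin.snoc T x)) x ∂D ∂(iid D n))
        = ∫ S, ℓ (A (n + 1) S) (S (Fin.last n)) ∂(iid D (n + 1)) := by
      calc (∫ T, ∫ x, ℓ (A (n + 1) (Fin.snoc T x)) x ∂D ∂(iid D n))
          = ∫ T, ∫ x,
              ℓ (A (n + 1) (Fin.snoc T x)) ((Fin.snoc T x : Fin (n + 1) → Z) (Fin.last n))
              ∂D ∂(iid D n) := by
            refine integral_congr_ae (Filter.Eventually.of_forall fun T => ?_)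
            refine integral_congr_ae (Filter.Eventually.of_forall fun x => ?_)
            simp [Fin.snoc_last]
        _ = ∫ S, ℓ (A (n + 1) S) (S (Fin.last n)) ∂(iid D (n + 1)) :=
            integral_snoc D n measGlast hbGlast
    -- P equals the empirical term at every index i
    have hPi : ∀ i : Fin (n + 1),
        (∫ S, ℓ (A (n + 1) S) (S (Fin.last n)) ∂(iid D (n + 1)))
          = ∫ S, ℓ (A (n + 1) S) (S i) ∂(iid D (n + 1)) := by
      intro i
      calc (∫ S, ℓ (A (n + 1) S) (S (Fin.last n)) ∂(iid D (n + 1)))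
          = ∫ S, ℓ (A (n + 1) (S ∘ ⇑(Equiv.swap (Fin.last n) i)))
              ((S ∘ ⇑(Equiv.swap (Fin.last n) i)) (Fin.last n)) ∂(iid D (n + 1)) :=
            (integral_perm D (n + 1) (Equiv.swap (Fin.last n) i) measGlast).symm
        _ = ∫ S, ℓ (A (n + 1) S) (S i) ∂(iid D (n + 1)) := by
            refine integral_congr_ae (Filter.Eventually.of_forall fun S => ?_)
            show ℓ (A (n + 1) (S ∘ ⇑(Equiv.swap (Fin.last n) i)))
              ((S ∘ ⇑(Equiv.swap (Fin.last n) i)) (Fin.last n)) = ℓ (A (n + 1) S) (S i)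
            rw [hsym (n + 1) (Equiv.swap (Fin.last n) i) S]
            simp [Equiv.swap_apply_left]
    -- difference identity at each index
    have hdm1 : ∀ i : Fin (n + 1), Measurable (fun p : (Fin (n + 1) → Z) × Z =>
        ℓ (A (n + 1) (Function.update p.1 i p.2)) (p.1 i)) :=
      fun i => hF1.comp (mp_exchange D (n + 1) i).measurable
    have hdm2 : ∀ i : Fin (n + 1), Measurable (fun p : (Fin (n + 1) → Z) × Z =>
        ℓ (A (n + 1) p.1) (p.1 i)) :=
      fun i => hF1.comp (measurable_fst.prodMk ((measurable_pi_apply i).comp measurable_fst))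
    have hdiff : ∀ i : Fin (n + 1),
        (∫ S, ∫ y, ℓ (A (n + 1) S) y ∂D ∂(iid D (n + 1)))
          - (∫ S, ℓ (A (n + 1) S) (S (Fin.last n)) ∂(iid D (n + 1)))
        = ∫ S, ∫ x, (ℓ (A (n + 1) (Function.update S i x)) (S i)
            - ℓ (A (n + 1) S) (S i)) ∂D ∂(iid D (n + 1)) := by
      intro i
      symm
      rw [iter_integral_sub (iid D (n + 1)) D
        (f := fun p : (Fin (n + 1) → Z) × Z =>
          ℓ (A (n + 1) (Function.update p.1 i p.2)) (p.1 i))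
        (g := fun p : (Fin (n + 1) → Z) × Z => ℓ (A (n + 1) p.1) (p.1 i))
        (hdm1 i) (fun p => hb1 (Function.update p.1 i p.2, p.1 i))
        (hdm2 i) (fun p => hb1 (p.1, p.1 i))]
      congr 1
      · exact integral_exchange D (n + 1) i hF1 hb1
      · calc (∫ S, ∫ _x, ℓ (A (n + 1) S) (S i) ∂D ∂(iid D (n + 1)))
            = ∫ S, ℓ (A (n + 1) S) (S i) ∂(iid D (n + 1)) :=
              integral_congr_ae (Filter.Eventually.of_forall fun S => by simp)
          _ = _ := (hPi i).symm
    have step : (∫ S, ∫ y, ℓ (A (n + 1) S) y ∂D ∂(iid D (n + 1)))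
        - (∫ S, ℓ (A (n + 1) S) (S (Fin.last n)) ∂(iid D (n + 1))) ≤ ε1 (n + 1) := by
      have hcast : ((n + 1 : ℕ) : ℝ) ≠ 0 := Nat.cast_ne_zero.mpr (Nat.succ_ne_zero n)
      calc (∫ S, ∫ y, ℓ (A (n + 1) S) y ∂D ∂(iid D (n + 1)))
            - (∫ S, ℓ (A (n + 1) S) (S (Fin.last n)) ∂(iid D (n + 1)))
          = ((n + 1 : ℕ) : ℝ)⁻¹ * ∑ i : Fin (n + 1),
              ((∫ S, ∫ y, ℓ (A (n + 1) S) y ∂D ∂(iid D (n + 1)))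
                - (∫ S, ℓ (A (n + 1) S) (S (Fin.last n)) ∂(iid D (n + 1)))) := by
            rw [Finset.sum_const, Finset.card_univ, Fintype.card_fin, nsmul_eq_mul,
              ← mul_assoc, inv_mul_cancel₀ hcast, one_mul]
        _ = ((n + 1 : ℕ) : ℝ)⁻¹ * ∑ i : Fin (n + 1),
              ∫ S, ∫ x, (ℓ (A (n + 1) (Function.update S i x)) (S i)
                - ℓ (A (n + 1) S) (S i)) ∂D ∂(iid D (n + 1)) := by
            rw [Finset.sum_congr rfl fun i _ => hdiff i]
        _ ≤ ((n + 1 : ℕ) : ℝ)⁻¹ * ∑ i : Fin (n + 1),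
              ∫ S, ∫ x, |ℓ (A (n + 1) S) (S i)
                - ℓ (A (n + 1) (Function.update S i x)) (S i)| ∂D ∂(iid D (n + 1)) := by
            refine mul_le_mul_of_nonneg_left (Finset.sum_le_sum fun i _ => ?_) (by positivity)
            refine iter_integral_mono (iid D (n + 1)) D (Cf := C1 + C1) (Cg := C1 + C1)
              ((hdm1 i).sub (hdm2 i))
              (fun p => (abs_sub _ _).trans (add_le_add
                (hb1 (Function.update p.1 i p.2, p.1 i)) (hb1 (p.1, p.1 i))))
              ((hdm2 i).sub (hdm1 i)).abs
              (fun p => by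
                rw [abs_abs]
                exact (abs_sub _ _).trans (add_le_add (hb1 (p.1, p.1 i))
                  (hb1 (Function.update p.1 i p.2, p.1 i))))
              (fun p => (le_abs_self _).trans (le_of_eq (abs_sub_comm _ _)))
        _ = ∫ S, ∫ x, ((n + 1 : ℕ) : ℝ)⁻¹ * ∑ i : Fin (n + 1),
              |ℓ (A (n + 1) S) (S i)
                - ℓ (A (n + 1) (Function.update S i x)) (S i)| ∂D ∂(iid D (n + 1)) := by
            simp_rw [integral_const_mul]
            congr 1
            exact (iter_integral_sum (iid D (n + 1)) D Finset.univ
              (f := fun (i : Fin (n + 1)) (p : (Fin (n + 1) → Z) × Z) =>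
                |ℓ (A (n + 1) p.1) (p.1 i)
                  - ℓ (A (n + 1) (Function.update p.1 i p.2)) (p.1 i)|)
              (C := fun _ => C1 + C1)
              (fun i => ((hdm2 i).sub (hdm1 i)).abs)
              (fun i p => by
                rw [abs_abs]
                exact (abs_sub _ _).trans (add_le_add (hb1 (p.1, p.1 i))
                  (hb1 (Function.update p.1 i p.2, p.1 i))))).symm
        _ ≤ ε1 (n + 1) := hst.2 D inferInstance (n + 1) (by omega)
    rw [hQiid, hPiid]
    exact step.trans (hst.1 (Nat.le_succ n))
  rw [key]
  have hmul : (m : ℝ)⁻¹ * ((∫ T, ∫ x, ∫ y, ℓ (A (n + 1) (Fin.snoc T x)) y ∂D ∂D ∂(iid D n))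
      - (∫ T, ∫ x, ℓ (A (n + 1) (Fin.snoc T x)) x ∂D ∂(iid D n)))
      ≤ (m : ℝ)⁻¹ * ε1 n :=
    mul_le_mul_of_nonneg_left hII (by positivity)
  have hexp : (1 + (m : ℝ)⁻¹) * ε1 n = ε1 n + (m : ℝ)⁻¹ * ε1 n := by ring
  linarith [hI, hmul, hε1nn, hexp]
end
end

section
/- For every probability measure D on Z and every n ≥ 1, E_{T~D^n} [ L_D(A_n(T)) − L_T(A_n(T)) ] = E_{T~D^n} E_{x'~D} [ (1/n) Σ_{i=1}^n ( ℓ(A_n(T^{i←x'}), T_i) − ℓ(A_n(T), T_i) ) ]. -/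
/-!
Replacing the `i`-th entry of an i.i.d. sample `T` by an independent fresh point `x'` and
swapping the roles of `T i` and `x'` preserves the law of `(T, x')`: up to the identification
`(Fin n → Z) × Z ≃ (Option (Fin n) → Z)`, it is the transposition of two coordinates of an
i.i.d. sample of size `n + 1`. Hence `E ℓ(A(T^{i←x'}), T i) = E ℓ(A T, x') = E L_D(A T)` for
every `i`, and averaging over `i` turns the right-hand side into the left-hand side.
-/

open MeasureTheory

noncomputable section

section ReplaceOne

variable {ι Z : Type*} [DecidableEq ι] [MeasurableSpace Z]

def replaceOneEquiv (i : ι) : ((ι → Z) × Z) ≃ᵐ ((ι → Z) × Z) :=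
  let e := MeasurableEquiv.piOptionEquivProd fun _ : Option ι => Z
  e.symm.trans ((MeasurableEquiv.piCongrLeft (fun _ => Z) (Equiv.swap (some i) none)).trans e)

@[simp]
theorem replaceOneEquiv_apply (i : ι) (p : (ι → Z) × Z) :
    replaceOneEquiv i p = (Function.update p.1 i p.2, p.1 i) := by
  have hperm : ∀ (σ : Equiv.Perm (Option ι)) (g : Option ι → Z),
      MeasurableEquiv.piCongrLeft (fun _ => Z) σ g = g ∘ σ.symm := by
    intro σ g
    ext o
    simp [MeasurableEquiv.coe_piCongrLeft, Equiv.piCongrLeft_apply]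
  have hsymm : (MeasurableEquiv.piOptionEquivProd fun _ : Option ι => Z).symm p =
      fun o => Option.elim o p.2 p.1 := by
    ext o
    cases o <;> rfl
  have hfwd : ∀ g : Option ι → Z,
      MeasurableEquiv.piOptionEquivProd (fun _ => Z) g = (g ∘ some, g none) := fun _ => rfl
  simp only [replaceOneEquiv, MeasurableEquiv.trans_apply, hperm, hsymm, hfwd, Equiv.symm_swap]
  ext j
  · by_cases h : j = i <;> simp [h, Equiv.swap_apply_def]
  · simp

variable [Fintype ι] (μ : Measure Z) [SigmaFinite μ]

theorem measurePreserving_replaceOneEquiv (i : ι) :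
    MeasurePreserving (replaceOneEquiv i) ((Measure.pi fun _ : ι => μ).prod μ)
      ((Measure.pi fun _ : ι => μ).prod μ) := by
  have he : MeasurePreserving (MeasurableEquiv.piOptionEquivProd fun _ : Option ι => Z).symm
      ((Measure.pi fun _ : ι => μ).prod μ) (Measure.pi fun _ => μ) :=
    ⟨MeasurableEquiv.measurable _, Measure.pi_map_piOptionEquivProd fun _ => μ⟩
  exact he.symm.comp ((measurePreserving_piCongrLeft (fun _ => μ) _).comp he)

theorem integral_prod_update (F : (ι → Z) → Z → ℝ) (i : ι) :
    ∫ p, F (Function.update p.1 i p.2) (p.1 i) ∂((Measure.pi fun _ : ι => μ).prod μ) =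
      ∫ p, F p.1 p.2 ∂((Measure.pi fun _ : ι => μ).prod μ) := by
  simpa only [replaceOneEquiv_apply] using
    (measurePreserving_replaceOneEquiv μ i).integral_comp' fun p => F p.1 p.2

theorem integrable_prod_update {F : (ι → Z) → Z → ℝ}
    (hF : Integrable (Function.uncurry F) ((Measure.pi fun _ : ι => μ).prod μ)) (i : ι) :
    Integrable (fun p : (ι → Z) × Z => F (Function.update p.1 i p.2) (p.1 i))
      ((Measure.pi fun _ : ι => μ).prod μ) := by
  simpa only [Function.comp_def, replaceOneEquiv_apply, Function.uncurry_apply_pair] using ((measurePreserving_replaceOneEquiv μ i).integrable_comp_emb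
    (MeasurableEquiv.measurableEmbedding _)).mpr hF

end ReplaceOne

section GeneralizationGap

variable {ι Z : Type*} [Fintype ι] [DecidableEq ι] [Nonempty ι] [MeasurableSpace Z]
  {μ : Measure Z} [IsProbabilityMeasure μ] {F : (ι → Z) → Z → ℝ}

theorem integral_generalizationGap_eq_integral_replaceOne
    (hF : Integrable (Function.uncurry F) ((Measure.pi fun _ : ι => μ).prod μ))
    (hdiag : ∀ i, Integrable (fun T => F T (T i)) (Measure.pi fun _ : ι => μ)) :
    ∫ T, ((∫ z, F T z ∂μ) - (Fintype.card ι : ℝ)⁻¹ * ∑ i, F T (T i))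
        ∂(Measure.pi fun _ : ι => μ) =
      ∫ T, ∫ x, (Fintype.card ι : ℝ)⁻¹ * ∑ i, (F (Function.update T i x) (T i) - F T (T i))
        ∂μ ∂(Measure.pi fun _ : ι => μ) := by
  set π := Measure.pi fun _ : ι => μ
  set c := (Fintype.card ι : ℝ)⁻¹
  set m := ∫ p, Function.uncurry F p ∂(π.prod μ)
  have hdiag_prod : ∀ i, Integrable (fun p : (ι → Z) × Z => F p.1 (p.1 i)) (π.prod μ) :=
    fun i => (hdiag i).comp_fst μ
  have hdiff : ∀ i, Integrable (fun p : (ι → Z) × Z =>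
      F (Function.update p.1 i p.2) (p.1 i) - F p.1 (p.1 i)) (π.prod μ) :=
    fun i => (integrable_prod_update μ hF i).sub (hdiag_prod i)
  have hlhs : ∫ T, ((∫ z, F T z ∂μ) - c * ∑ i, F T (T i)) ∂π =
      m - c * ∑ i, ∫ T, F T (T i) ∂π := by
    have hrisk : Integrable (fun T => ∫ z, F T z ∂μ) π := hF.integral_prod_left
    rw [integral_sub hrisk ((integrable_finsetSum _ fun i _ => hdiag i).const_mul c),
      integral_const_mul, integral_finsetSum _ fun i _ => hdiag i]
    exact congrArg (· - _) (integral_prod _ hF).symm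
  have hrhs : ∫ T, ∫ x, c * ∑ i, (F (Function.update T i x) (T i) - F T (T i)) ∂μ ∂π =
      c * ∑ i, (m - ∫ T, F T (T i) ∂π) := by
    rw [← integral_prod _ ((integrable_finsetSum _ fun i _ => hdiff i).const_mul c),
      integral_const_mul, integral_finsetSum _ fun i _ => hdiff i]
    congr 1
    refine Finset.sum_congr rfl fun i _ => ?_
    rw [integral_sub (integrable_prod_update μ hF i) (hdiag_prod i), integral_prod_update,
      integral_fun_fst (fun T => F T (T i)), probReal_univ, one_smul]
    rfl
  rw [hlhs, hrhs, Finset.sum_sub_distrib, Finset.sum_const, Finset.card_univ, nsmul_eq_mul,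
    mul_sub, ← mul_assoc, inv_mul_cancel₀ (by positivity), one_mul]

end GeneralizationGap

theorem stmt_5_general {Z H : Type*} [MeasurableSpace Z] (ℓ : H → Z → ℝ)
    (A : ∀ k : ℕ, (Fin k → Z) → H)
    (hℓ : ∀ (h : H) (z : Z), 0 ≤ ℓ h z)
    (hmb : MeasBddAlg ℓ A)
    (D : Measure Z) [IsProbabilityMeasure D] (n : ℕ) (hn : 1 ≤ n) :
    ∫ T,
        ((∫ z, ℓ (A n T) z ∂D) - (n : ℝ)⁻¹ * ∑ i : Fin n, ℓ (A n T) (T i))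
      ∂(iid D n) =
      ∫ T, ∫ x',
          (n : ℝ)⁻¹ * ∑ i : Fin n,
            (ℓ (A n (Function.update T i x')) (T i) - ℓ (A n T) (T i))
        ∂D ∂(iid D n) := by
  unfold iid
  obtain ⟨hmeas, C, hC⟩ := hmb n
  have hbound : ∀ T z, ‖ℓ (A n T) z‖ ≤ C := fun T z => by
    rw [Real.norm_eq_abs, abs_of_nonneg (hℓ _ _)]
    exact hC T z
  have hF : Integrable (fun p : (Fin n → Z) × Z => ℓ (A n p.1) p.2)
      ((Measure.pi fun _ => D).prod D) :=
    .of_bound hmeas.aestronglyMeasurable C (ae_of_all _ fun p => hbound p.1 p.2)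
  have hdiag : ∀ i, Integrable (fun T : Fin n → Z => ℓ (A n T) (T i))
      (Measure.pi fun _ => D) := fun i =>
    .of_bound (hmeas.comp (measurable_id.prodMk (measurable_pi_apply i))).aestronglyMeasurable C
      (ae_of_all _ fun T => hbound T (T i))
  have : Nonempty (Fin n) := ⟨⟨0, hn⟩⟩
  simpa only [Fintype.card_fin] using integral_generalizationGap_eq_integral_replaceOne
    (F := fun T z => ℓ (A n T) z) hF hdiag

/-- the expected generalization gap equals the expected
replace-one loss difference. -/
theorem stmt_5 {Z H : Type*} [MeasurableSpace Z] (ℓ : H → Z → ℝ)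
    (A : ∀ k : ℕ, (Fin k → Z) → H)
    (hℓ : ∀ (h : H) (z : Z), 0 ≤ ℓ h z)
    (hsym : IsSymmetricAlg A) (hmb : MeasBddAlg ℓ A)
    (D : Measure Z) [IsProbabilityMeasure D] (n : ℕ) (hn : 1 ≤ n) :
    ∫ T,
        ((∫ z, ℓ (A n T) z ∂D) - (n : ℝ)⁻¹ * ∑ i : Fin n, ℓ (A n T) (T i))
      ∂(iid D n) =
      ∫ T, ∫ x',
          (n : ℝ)⁻¹ * ∑ i : Fin n,
            (ℓ (A n (Function.update T i x')) (T i) - ℓ (A n T) (T i))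
        ∂D ∂(iid D n) :=
  stmt_5_general ℓ A hℓ hmb D n hn
end
end
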